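/- arXiv:2310.11573 — 9 statements merged into one kernel-verified Lean document; each statement's English description precedes it below -/
import Mathlib

section
/- In a graph on at least two vertices, the maximal proper strong modules form a partition of the vertex set. -/
variable {V : Type*} [Fintype V] [DecidableEq V]

/-- `C` is a connected component of the subgraph of `G` induced on `S`. -/
def IsCompOf (G : SimpleGraph V) (S C : Finset V) : Prop :=
  C.Nonempty ∧ C ⊆ S ∧ (G.induce (C : Set V)).Connected ∧
    ∀ u ∈ C, ∀ v ∈ S, G.Adj u v → v ∈ C

/-- `M` is a module of the subgraph of `G` induced on `A`. -/
def IsModuleOn (G : SimpleGraph V) (A M : Finset V) : Prop :=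
  M.Nonempty ∧ M ⊆ A ∧ ∀ u ∈ A, u ∉ M →
    (∀ v ∈ M, G.Adj u v) ∨ (∀ v ∈ M, ¬ G.Adj u v)

/-- `M` is a strong module of the subgraph of `G` induced on `A`. -/
def IsStrongModuleOn (G : SimpleGraph V) (A M : Finset V) : Prop :=
  IsModuleOn G A M ∧ ∀ M', IsModuleOn G A M' → M ⊆ M' ∨ M' ⊆ M ∨ Disjoint M M'

/-- `M` is a maximal proper strong module of the subgraph of `G` induced on `A`. -/
def IsMaxProperStrongOn (G : SimpleGraph V) (A M : Finset V) : Prop :=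
  IsStrongModuleOn G A M ∧ M ≠ A ∧
    ∀ M', IsStrongModuleOn G A M' → M' ≠ A → M ⊆ M' → M = M'

/-- `C` is a full component of `X` in `G`: a connected component of `G - X`
in which every vertex of `X` has a neighbor. -/
def IsFullComp (G : SimpleGraph V) (X C : Finset V) : Prop :=
  IsCompOf G (Finset.univ \ X) C ∧ ∀ x ∈ X, ∃ c ∈ C, G.Adj x c

/-- `X` is a minimal separator of `G`: it has at least two full components. -/
def IsMinSep (G : SimpleGraph V) (X : Finset V) : Prop :=
  ∃ A B : Finset V, IsFullComp G X A ∧ IsFullComp G X B ∧ A ≠ B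

/-- `f` enumerates an induced path on `k` vertices in `G`. -/
def IsInducedPath {k : ℕ} (G : SimpleGraph V) (f : Fin k → V) : Prop :=
  Function.Injective f ∧
    ∀ i j : Fin k, G.Adj (f i) (f j) ↔ (i.1 + 1 = j.1 ∨ j.1 + 1 = i.1)

/-- `G` has no induced path on `t` vertices. -/
def PFree (t : ℕ) (G : SimpleGraph V) : Prop := ¬ ∃ f : Fin t → V, IsInducedPath G f

/-- The neighborhood of a set `Q`: all vertices outside `Q` with a neighbor in `Q`. -/
def nbhd (G : SimpleGraph V) [DecidableRel G.Adj] (Q : Finset V) : Finset V :=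
  Finset.univ.filter (fun v => v ∉ Q ∧ ∃ q ∈ Q, G.Adj v q)

/-- `M` is a union of at least two connected components of the subgraph of `G`
induced on `S`. -/
def UnionOfAtLeastTwoComps (G : SimpleGraph V) (S M : Finset V) : Prop :=
  ∃ F : Finset (Finset V), 2 ≤ F.card ∧ (∀ C ∈ F, IsCompOf G S C) ∧ M = F.sup id

/-- In a graph on at least two vertices, the maximal proper strong modules
form a partition of the vertex set: every vertex lies in exactly one. -/
theorem maxProperStrong_partition (G : SimpleGraph V) (hV : 2 ≤ Fintype.card V) :
    ∀ v : V, ∃! M : Finset V, IsMaxProperStrongOn G Finset.univ M ∧ v ∈ M := by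
  classical
  intro v
  -- {v} is a proper strong module
  have hsingle : IsStrongModuleOn G Finset.univ {v} ∧ ({v} : Finset V) ≠ Finset.univ ∧
      v ∈ ({v} : Finset V) := by
    refine ⟨⟨⟨⟨v, Finset.mem_singleton_self v⟩, Finset.subset_univ _, ?_⟩, ?_⟩, ?_, Finset.mem_singleton_self v⟩
    · intro u _ hu
      by_cases h : G.Adj u v
      · exact Or.inl (fun w hw => by rw [Finset.mem_singleton] at hw; subst hw; exact h)
      · exact Or.inr (fun w hw => by rw [Finset.mem_singleton] at hw; subst hw; exact h)
    · intro M' hM'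
      by_cases h : v ∈ M'
      · exact Or.inl (Finset.singleton_subset_iff.mpr h)
      · exact Or.inr (Or.inr (Finset.disjoint_singleton_left.mpr h))
    · intro h
      obtain ⟨w, hw⟩ := Fintype.exists_ne_of_one_lt_card (by omega) v
      have : w ∈ ({v} : Finset V) := h ▸ Finset.mem_univ w
      exact hw (Finset.mem_singleton.mp this)
  set s : Finset (Finset V) := Finset.univ.filter
      (fun M => IsStrongModuleOn G Finset.univ M ∧ M ≠ Finset.univ ∧ v ∈ M) with hs
  have hmem : ∀ M, M ∈ s ↔ IsStrongModuleOn G Finset.univ M ∧ M ≠ Finset.univ ∧ v ∈ M := by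
    intro M; simp [hs]
  have hne : s.Nonempty := ⟨{v}, (hmem _).mpr hsingle⟩
  obtain ⟨M, hMs, hMmax⟩ := s.exists_max_image Finset.card hne
  obtain ⟨hMstrong, hMne, hvM⟩ := (hmem M).mp hMs
  have hMaxM : IsMaxProperStrongOn G Finset.univ M := by
    refine ⟨hMstrong, hMne, ?_⟩
    intro M' hM' hM'ne hsub
    have hM's : M' ∈ s := (hmem _).mpr ⟨hM', hM'ne, hsub hvM⟩
    exact Finset.eq_of_subset_of_card_le hsub (hMmax _ hM's)
  refine ⟨M, ⟨hMaxM, hvM⟩, ?_⟩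
  rintro M₁ ⟨⟨hM₁strong, hM₁ne, hM₁max⟩, hvM₁⟩
  have hnd : ¬ Disjoint M₁ M := fun h => (Finset.disjoint_left.mp h hvM₁) hvM
  rcases hM₁strong.2 M hMstrong.1 with h | h | h
  · exact hM₁max M hMstrong hMne h
  · exact (hMaxM.2.2 M₁ hM₁strong hM₁ne h).symm
  · exact absurd h hnd
end

section
/- For every module M in a graph G, there exists a unique strong module M' containing M that is inclusion-wise minimal among strong modules containing M. -/
variable {V : Type*} [Fintype V] [DecidableEq V]

/-- For every module M of G there is a unique inclusion-wise minimal strong module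
of G containing M. -/
theorem exists_unique_minimal_strong_superset (G : SimpleGraph V) (M : Finset V)
    (hM : IsModuleOn G Finset.univ M) :
    ∃! M' : Finset V, IsStrongModuleOn G Finset.univ M' ∧ M ⊆ M' ∧
      ∀ M'' : Finset V, IsStrongModuleOn G Finset.univ M'' → M ⊆ M'' → M' ⊆ M'' := by

  classical
  obtain ⟨x, hx⟩ := hM.1
  have huniv : IsStrongModuleOn G Finset.univ Finset.univ := by
    refine ⟨⟨⟨x, Finset.mem_univ x⟩, subset_rfl, fun u hu hnu => (hnu (Finset.mem_univ u)).elim⟩,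
      fun M' hM' => Or.inr (Or.inl hM'.2.1)⟩
  -- comparability
  have hcomp : ∀ A B : Finset V, IsStrongModuleOn G Finset.univ A → M ⊆ A →
      IsStrongModuleOn G Finset.univ B → M ⊆ B → A ⊆ B ∨ B ⊆ A := by
    intro A B hA hMA hB hMB
    rcases hA.2 B hB.1 with h | h | h
    · exact Or.inl h
    · exact Or.inr h
    · exact absurd (hMB hx) (Finset.disjoint_left.mp h (hMA hx))
  set s : Finset (Finset V) :=
    Finset.univ.filter (fun A => IsStrongModuleOn G Finset.univ A ∧ M ⊆ A) with hs
  have hsne : s.Nonempty := ⟨Finset.univ, by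
    simp only [hs, Finset.mem_filter, Finset.mem_univ, true_and]
    exact ⟨huniv, Finset.subset_univ M⟩⟩
  obtain ⟨M', hM's, hmin⟩ := Finset.exists_min_image s Finset.card hsne
  rw [hs, Finset.mem_filter] at hM's
  obtain ⟨-, hM'strong, hMM'⟩ := hM's
  have hminimal : ∀ M'' : Finset V, IsStrongModuleOn G Finset.univ M'' → M ⊆ M'' → M' ⊆ M'' := by
    intro M'' h2 hM2
    rcases hcomp M' M'' hM'strong hMM' h2 hM2 with h | h
    · exact h
    · have hle : M'.card ≤ M''.card := hmin M'' (by
        simp only [hs, Finset.mem_filter, Finset.mem_univ, true_and]; exact ⟨h2, hM2⟩)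
      have := Finset.eq_of_subset_of_card_le h hle
      exact this ▸ h
  refine ⟨M', ⟨hM'strong, hMM', hminimal⟩, ?_⟩
  intro N ⟨hN, hMN, hNmin⟩
  exact Finset.Subset.antisymm (hNmin M' hM'strong hMM') (hminimal N hN hMN)
end

section
/- For every module M in a graph G, letting M' be the inclusion-wise minimal strong module containing M, one of the following holds: (1) M = M'; (2) the induced subgraph G[M'] is disconnected and M is a union of at least two connected components of G[M']; or (3) the complement of G[M'] is disconnected and M is a union of at least two connected components of the complement of G[M']. -/
variable {V : Type*} [Fintype V] [DecidableEq V]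

section ModTrichotomyHelpers
open Finset SimpleGraph
variable {G : SimpleGraph V}

lemma crossing_of_walk {S A : Finset V} {x y : (S : Set V)}
    (p : (G.induce (S : Set V)).Walk x y) (hx : (x : V) ∈ A) (hy : (y : V) ∉ A) :
    ∃ u ∈ A, ∃ v ∈ S, v ∉ A ∧ G.Adj u v := by
  induction p with
  | nil => exact absurd hx hy
  | @cons x y z h p ih =>
    by_cases hy' : (y : V) ∈ A
    · exact ih hy' hy
    · exact ⟨x, hx, y, by simpa using y.2, hy', by simpa using h⟩

/-- A crossing edge out of a set `A` in a connected induced subgraph. -/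
lemma exists_crossing {S A : Finset V} (hconn : (G.induce (S : Set V)).Connected)
    (hAS : A ⊆ S) {a b : V} (ha : a ∈ A) (hb : b ∈ S) (hbA : b ∉ A) :
    ∃ u ∈ A, ∃ v ∈ S, v ∉ A ∧ G.Adj u v := by
  obtain ⟨p⟩ := hconn.preconnected ⟨a, by simpa using hAS ha⟩ ⟨b, by simpa using hb⟩
  exact crossing_of_walk p ha hbA

lemma reach_of_walk_support {S C : Finset V} {x y : (S : Set V)}
    (p : (G.induce (S : Set V)).Walk x y) (hp : ∀ u ∈ p.support, (u : V) ∈ C) :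
    ∃ (hx : (x : V) ∈ C) (hy : (y : V) ∈ C),
      (G.induce (C : Set V)).Reachable ⟨x, by simpa using hx⟩ ⟨y, by simpa using hy⟩ := by
  induction p with
  | nil =>
    have h := hp _ (SimpleGraph.Walk.start_mem_support _)
    exact ⟨h, h, Reachable.refl _⟩
  | @cons x y z h p ih =>
    obtain ⟨h1, h2, hr⟩ := ih (fun u hu => hp u (by simp [hu]))
    have hx : (x : V) ∈ C := hp _ (SimpleGraph.Walk.start_mem_support _)
    have hadj : (G.induce (C : Set V)).Adj ⟨x, by simpa using hx⟩ ⟨y, by simpa using h1⟩ := by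
      simpa using (by simpa using h : G.Adj x y)
    exact ⟨hx, h2, hadj.reachable.trans hr⟩


open Classical in
/-- The connected component of `v` in the subgraph induced on `S`. -/
noncomputable def gcomp (G : SimpleGraph V) (S : Finset V) (v : V) : Finset V :=
  S.filter (fun u => ∃ (hv : v ∈ S) (hu : u ∈ S),
    (G.induce (S : Set V)).Reachable ⟨v, by simpa using hv⟩ ⟨u, by simpa using hu⟩)

lemma mem_gcomp {S : Finset V} {v u : V} :
    u ∈ gcomp G S v ↔ u ∈ S ∧ ∃ (hv : v ∈ S) (hu : u ∈ S),
      (G.induce (S : Set V)).Reachable ⟨v, by simpa using hv⟩ ⟨u, by simpa using hu⟩ := by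
  classical simp [gcomp, Finset.mem_filter]

lemma self_mem_gcomp {S : Finset V} {v : V} (hv : v ∈ S) : v ∈ gcomp G S v :=
  mem_gcomp.2 ⟨hv, hv, hv, Reachable.refl _⟩

lemma gcomp_isCompOf {S : Finset V} {v : V} (hv : v ∈ S) : IsCompOf G S (gcomp G S v) := by
  refine ⟨⟨v, self_mem_gcomp hv⟩, fun u hu => (mem_gcomp.1 hu).1, ?_, ?_⟩
  · rw [SimpleGraph.connected_iff]
    refine ⟨?_, ⟨⟨v, by simpa using self_mem_gcomp (G := G) hv⟩⟩⟩
    rintro ⟨x, hx⟩ ⟨y, hy⟩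
    have hx2 : x ∈ gcomp G S v := by simpa using hx
    have hy2 : y ∈ gcomp G S v := by simpa using hy
    obtain ⟨hxS, hva, hx2a, hrx⟩ := mem_gcomp.1 hx2
    obtain ⟨hyS, hvb, hy2b, hry⟩ := mem_gcomp.1 hy2
    obtain ⟨px⟩ := hrx
    obtain ⟨py⟩ := hry
    have hpx : ∀ u ∈ px.support, (u : V) ∈ gcomp G S v := by
      intro u hu
      exact mem_gcomp.2 ⟨by simpa using u.2, hv, by simpa using u.2,
        ⟨(px.takeUntil u hu).copy rfl (by ext; rfl)⟩⟩
    have hpy : ∀ u ∈ py.support, (u : V) ∈ gcomp G S v := by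
      intro u hu
      exact mem_gcomp.2 ⟨by simpa using u.2, hv, by simpa using u.2,
        ⟨(py.takeUntil u hu).copy rfl (by ext; rfl)⟩⟩
    obtain ⟨h1, h2, r1⟩ := reach_of_walk_support px hpx
    obtain ⟨h3, h4, r2⟩ := reach_of_walk_support py hpy
    exact r1.symm.trans r2
  · rintro u hu w hw hadj
    obtain ⟨huS, hvc, hu2c, hr⟩ := mem_gcomp.1 hu
    refine mem_gcomp.2 ⟨hw, hv, hw, hr.trans (SimpleGraph.Adj.reachable ?_)⟩
    simpa using hadj

lemma gcomp_strong {M' : Finset V} (hM' : IsStrongModuleOn G Finset.univ M') {v : V}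
    (hv : v ∈ M') : IsStrongModuleOn G Finset.univ (gcomp G M' v) := by
  obtain ⟨hCne, hCsub, hCconn, hCcl⟩ := gcomp_isCompOf (G := G) hv
  set C := gcomp G M' v with hC
  have hmod : IsModuleOn G Finset.univ C := by
    refine ⟨hCne, Finset.subset_univ _, fun u _ huC => ?_⟩
    by_cases huM : u ∈ M'
    · exact Or.inr (fun w hw hadj => huC (hCcl w hw u huM hadj.symm))
    · rcases hM'.1.2.2 u (Finset.mem_univ u) huM with h | h
      · exact Or.inl (fun w hw => h w (hCsub hw))
      · exact Or.inr (fun w hw => h w (hCsub hw))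
  refine ⟨hmod, fun Z hZ => ?_⟩
  by_contra hcon
  push_neg at hcon
  obtain ⟨hCZ, hZC, hdisj⟩ := hcon
  obtain ⟨z0, hz0C, hz0Z⟩ := Finset.not_disjoint_iff.1 hdisj
  obtain ⟨z1, hz1Z, hz1C⟩ := Finset.not_subset.1 hZC
  rcases hM'.2 Z hZ with hMZ | hZM | hd
  · exact hCZ (fun z hz => hMZ (hCsub hz))
  · obtain ⟨b, hbC, hbZ⟩ := Finset.not_subset.1 hCZ
    obtain ⟨u, hu, w, hwC, hwA, hadj⟩ := exists_crossing (A := C ∩ Z) hCconn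
      (Finset.inter_subset_left) (Finset.mem_inter.2 ⟨hz0C, hz0Z⟩) hbC
      (fun hb => hbZ (Finset.mem_inter.1 hb).2)
    have hwZ : w ∉ Z := fun h => hwA (Finset.mem_inter.2 ⟨hwC, h⟩)
    have hall : ∀ x ∈ Z, G.Adj w x := by
      rcases hZ.2.2 w (Finset.mem_univ w) hwZ with h | h
      · exact h
      · exact absurd hadj.symm (h u (Finset.mem_inter.1 hu).2)
    exact hz1C (hCcl w hwC z1 (hZM hz1Z) (hall z1 hz1Z))
  · exact (Finset.disjoint_left.1 hd (hCsub hz0C)) hz0Z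

lemma isModuleOn_compl_of {M : Finset V} (h : IsModuleOn G Finset.univ M) :
    IsModuleOn Gᶜ Finset.univ M := by
  refine ⟨h.1, h.2.1, fun u hu huM => ?_⟩
  rcases h.2.2 u hu huM with hall | hnone
  · exact Or.inr (fun v hv hc => ((G.compl_adj u v).1 hc).2 (hall v hv))
  · exact Or.inl (fun v hv => (G.compl_adj u v).2 ⟨fun he => huM (he ▸ hv), hnone v hv⟩)

lemma isModuleOn_compl_iff {M : Finset V} :
    IsModuleOn G Finset.univ M ↔ IsModuleOn Gᶜ Finset.univ M :=
  ⟨isModuleOn_compl_of, fun h => by simpa using isModuleOn_compl_of (G := Gᶜ) h⟩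

lemma isStrongModuleOn_compl_iff {M : Finset V} :
    IsStrongModuleOn G Finset.univ M ↔ IsStrongModuleOn Gᶜ Finset.univ M := by
  constructor <;> rintro ⟨h1, h2⟩
  · exact ⟨isModuleOn_compl_iff.1 h1, fun Z hZ => h2 Z (isModuleOn_compl_iff.2 hZ)⟩
  · exact ⟨isModuleOn_compl_iff.2 h1, fun Z hZ => h2 Z (isModuleOn_compl_iff.1 hZ)⟩

lemma disconnected_case (G : SimpleGraph V) (M M' : Finset V)
    (hM : IsModuleOn G Finset.univ M)
    (hM' : IsStrongModuleOn G Finset.univ M') (hsub : M ⊆ M')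
    (hmin : ∀ M'' : Finset V, IsStrongModuleOn G Finset.univ M'' → M ⊆ M'' → M' ⊆ M'')
    (hdis : ¬ (G.induce (M' : Set V)).Connected) :
    M = M' ∨ UnionOfAtLeastTwoComps G M' M := by
  classical
  have hcsub : ∀ v ∈ M, gcomp G M' v ⊆ M := by
    intro v hvM
    have hvM' := hsub hvM
    have hstr := gcomp_strong hM' hvM'
    rcases hstr.2 M hM with h1 | h2 | h3
    · exact h1
    · have hle := hmin _ hstr h2
      have heq : gcomp G M' v = M' :=
        Finset.Subset.antisymm (gcomp_isCompOf hvM').2.1 hle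
      exact absurd (heq ▸ (gcomp_isCompOf (G := G) hvM').2.2.1) hdis
    · exact absurd hvM (Finset.disjoint_left.1 h3 (self_mem_gcomp hvM'))
  set F := M.image (fun v => gcomp G M' v) with hF
  have hMsup : M = F.sup id := by
    ext u
    rw [Finset.mem_sup]
    constructor
    · intro hu
      exact ⟨gcomp G M' u, Finset.mem_image_of_mem _ hu, self_mem_gcomp (hsub hu)⟩
    · rintro ⟨C, hC, huC⟩
      obtain ⟨v, hv, rfl⟩ := Finset.mem_image.1 hC
      exact hcsub v hv huC
  have hFcomp : ∀ C ∈ F, IsCompOf G M' C := by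
    intro C hC
    obtain ⟨v, hv, rfl⟩ := Finset.mem_image.1 hC
    exact gcomp_isCompOf (hsub hv)
  by_cases hcard : 2 ≤ F.card
  · exact Or.inr ⟨F, hcard, hFcomp, hMsup⟩
  · left
    have hne : F.Nonempty := hM.1.image _
    have hone : F.card = 1 := le_antisymm (by omega) hne.card_pos
    obtain ⟨C, hCeq⟩ := Finset.card_eq_one.1 hone
    obtain ⟨v, hv, hvC⟩ := Finset.mem_image.1 (hCeq ▸ Finset.mem_singleton_self C)
    have hMC : M = C := by rw [hMsup, hCeq]; simp
    have hstr := gcomp_strong hM' (hsub hv)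
    rw [hvC] at hstr
    have hle := hmin C hstr (hMC.le)
    exact Finset.Subset.antisymm hsub (hle.trans hMC.ge)

lemma both_connected_case (G : SimpleGraph V) (M M' : Finset V)
    (hM : IsModuleOn G Finset.univ M)
    (hM' : IsStrongModuleOn G Finset.univ M') (hsub : M ⊆ M')
    (hmin : ∀ M'' : Finset V, IsStrongModuleOn G Finset.univ M'' → M ⊆ M'' → M' ⊆ M'')
    (hconn : (G.induce (M' : Set V)).Connected)
    (hconnc : ((Gᶜ).induce (M' : Set V)).Connected) : M = M' := by
  classical
  by_contra hne
  set S := (M'.powerset.filter (fun W => M ⊆ W ∧ W ≠ M' ∧ IsModuleOn G Finset.univ W)) with hS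
  have hMS : M ∈ S :=
    Finset.mem_filter.2 ⟨Finset.mem_powerset.2 hsub, Finset.Subset.refl M, hne, hM⟩
  obtain ⟨W, hWS, hWmax⟩ := Finset.exists_max_image S Finset.card ⟨M, hMS⟩
  obtain ⟨hWp, hMW, hWne, hWmod⟩ := Finset.mem_filter.1 hWS
  have hWsub : W ⊆ M' := Finset.mem_powerset.1 hWp
  have hWstrong : IsStrongModuleOn G Finset.univ W := by
    refine ⟨hWmod, fun Z hZ => ?_⟩
    by_contra hcon
    push_neg at hcon
    obtain ⟨hWZ, hZW, hdisj⟩ := hcon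
    obtain ⟨z0, hz0W, hz0Z⟩ := Finset.not_disjoint_iff.1 hdisj
    obtain ⟨z1, hz1Z, hz1W⟩ := Finset.not_subset.1 hZW
    obtain ⟨a, haW, haZ⟩ := Finset.not_subset.1 hWZ
    have hZM' : Z ⊆ M' := by
      rcases hM'.2 Z hZ with h | h | h
      · exact absurd (fun w hw => h (hWsub hw)) hWZ
      · exact h
      · exact absurd hz0Z (Finset.disjoint_left.1 h (hWsub hz0W))
    have hUmod : IsModuleOn G Finset.univ (W ∪ Z) := by
      refine ⟨⟨z0, Finset.mem_union_left _ hz0W⟩, Finset.subset_univ _, ?_⟩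
      intro u hu huU
      have huW : u ∉ W := fun h => huU (Finset.mem_union_left _ h)
      have huZ : u ∉ Z := fun h => huU (Finset.mem_union_right _ h)
      rcases hWmod.2.2 u hu huW with hw | hw <;> rcases hZ.2.2 u hu huZ with hz | hz
      · exact Or.inl (fun v hv => (Finset.mem_union.1 hv).elim (hw v) (hz v))
      · exact absurd (hw z0 hz0W) (hz z0 hz0Z)
      · exact absurd (hz z0 hz0Z) (hw z0 hz0W)
      · exact Or.inr (fun v hv => (Finset.mem_union.1 hv).elim (hw v) (hz v))
    have hUeq : W ∪ Z = M' := by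
      by_contra hUne
      have hUS : W ∪ Z ∈ S := Finset.mem_filter.2
        ⟨Finset.mem_powerset.2 (Finset.union_subset hWsub hZM'),
          fun x hx => Finset.mem_union_left _ (hMW hx), hUne, hUmod⟩
      have hc := hWmax _ hUS
      have hlt : W.card < (W ∪ Z).card := Finset.card_lt_card
        ⟨Finset.subset_union_left, fun hsub' => hz1W (hsub' (Finset.mem_union_right _ hz1Z))⟩
      omega
    rcases hZ.2.2 a (Finset.mem_univ a) haZ with hall | hnone
    · have htype : ∀ u ∈ W, u ∉ Z → ∀ x ∈ Z, G.Adj u x := by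
        intro u huW huZ
        rcases hZ.2.2 u (Finset.mem_univ u) huZ with h | h
        · exact h
        · exfalso
          rcases hWmod.2.2 z1 (Finset.mem_univ z1) hz1W with hb | hb
          · exact h z1 hz1Z (hb u huW).symm
          · exact hb a haW (hall z1 hz1Z).symm
      obtain ⟨u, hu, w, hwM, hwA, hadj⟩ := exists_crossing (G := Gᶜ) (A := W \ Z) hconnc
        (fun x hx => hWsub (Finset.mem_sdiff.1 hx).1) (Finset.mem_sdiff.2 ⟨haW, haZ⟩)
        (hZM' hz1Z) (fun h => (Finset.mem_sdiff.1 h).2 hz1Z)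
      have hwZ : w ∈ Z := by
        have hw2 : w ∈ W ∪ Z := hUeq ▸ hwM
        rcases Finset.mem_union.1 hw2 with h | h
        · by_cases hz : w ∈ Z
          · exact hz
          · exact absurd (Finset.mem_sdiff.2 ⟨h, hz⟩) hwA
        · exact h
      obtain ⟨huW2, huZ2⟩ := Finset.mem_sdiff.1 hu
      exact ((G.compl_adj u w).1 hadj).2 (htype u huW2 huZ2 w hwZ)
    · have htype : ∀ u ∈ W, u ∉ Z → ∀ x ∈ Z, ¬ G.Adj u x := by
        intro u huW huZ
        rcases hZ.2.2 u (Finset.mem_univ u) huZ with h | h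
        · exfalso
          rcases hWmod.2.2 z1 (Finset.mem_univ z1) hz1W with hb | hb
          · exact hnone z1 hz1Z (hb a haW).symm
          · exact hb u huW (h z1 hz1Z).symm
        · exact h
      obtain ⟨u, hu, w, hwM, hwA, hadj⟩ := exists_crossing (G := G) (A := W \ Z) hconn
        (fun x hx => hWsub (Finset.mem_sdiff.1 hx).1) (Finset.mem_sdiff.2 ⟨haW, haZ⟩)
        (hZM' hz1Z) (fun h => (Finset.mem_sdiff.1 h).2 hz1Z)
      have hwZ : w ∈ Z := by
        have hw2 : w ∈ W ∪ Z := hUeq ▸ hwM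
        rcases Finset.mem_union.1 hw2 with h | h
        · by_cases hz : w ∈ Z
          · exact hz
          · exact absurd (Finset.mem_sdiff.2 ⟨h, hz⟩) hwA
        · exact h
      obtain ⟨huW2, huZ2⟩ := Finset.mem_sdiff.1 hu
      exact htype u huW2 huZ2 w hwZ hadj
  exact hWne (Finset.Subset.antisymm hWsub (hmin W hWstrong hMW))

end ModTrichotomyHelpers

/-- Let M' be the inclusion-wise minimal strong module containing a module M. Then
either M = M', or G[M'] is disconnected and M is a union of at least two of its
components, or the complement of G[M'] is disconnected and M is a union of at least
two of its components. -/
theorem module_trichotomy (G : SimpleGraph V) (M M' : Finset V)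
    (hM : IsModuleOn G Finset.univ M)
    (hM' : IsStrongModuleOn G Finset.univ M') (hsub : M ⊆ M')
    (hmin : ∀ M'' : Finset V, IsStrongModuleOn G Finset.univ M'' → M ⊆ M'' → M' ⊆ M'') :
    M = M' ∨
    (¬ (G.induce (M' : Set V)).Connected ∧ UnionOfAtLeastTwoComps G M' M) ∨
    (¬ ((Gᶜ).induce (M' : Set V)).Connected ∧ UnionOfAtLeastTwoComps Gᶜ M' M) := by
  by_cases hdis : (G.induce (M' : Set V)).Connected
  · by_cases hdisc : ((Gᶜ).induce (M' : Set V)).Connected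
    · exact Or.inl (both_connected_case G M M' hM hM' hsub hmin hdis hdisc)
    · have hminc : ∀ M'' : Finset V, IsStrongModuleOn Gᶜ Finset.univ M'' → M ⊆ M'' → M' ⊆ M'' :=
        fun M'' h hs => hmin M'' (isStrongModuleOn_compl_iff.2 h) hs
      rcases disconnected_case Gᶜ M M' (isModuleOn_compl_of hM)
        (isStrongModuleOn_compl_iff.1 hM') hsub hminc hdisc with h | h
      · exact Or.inl h
      · exact Or.inr (Or.inr ⟨hdisc, h⟩)
  · rcases disconnected_case G M M' hM hM' hsub hmin hdis with h | h
    · exact Or.inl h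
    · exact Or.inr (Or.inl ⟨hdis, h⟩)
end

section
/- An n-vertex graph of clique number at most k contains at most 2^k · (2n−1) connected modules. -/
variable {V : Type*} [Fintype V] [DecidableEq V]

namespace ConnModsAux

open Finset

-- The finset of connected modules of `G` on `A`.
open Classical in
noncomputable def connMods (G : SimpleGraph V) (A : Finset V) : Finset (Finset V) :=
  A.powerset.filter (fun M => IsModuleOn G A M ∧ (G.induce (M : Set V)).Connected)

open Classical in
lemma mem_connMods {G : SimpleGraph V} {A M : Finset V} :
    M ∈ connMods G A ↔ M ⊆ A ∧ IsModuleOn G A M ∧ (G.induce (M : Set V)).Connected := by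
  simp [connMods, Finset.mem_filter, Finset.mem_powerset, and_assoc]

/-- The graph of `G`-edges inside `A`. -/
def Lg (G : SimpleGraph V) (A : Finset V) : SimpleGraph V where
  Adj x y := x ∈ A ∧ y ∈ A ∧ G.Adj x y
  symm := ⟨fun _ _ ⟨ha, hb, h⟩ => ⟨hb, ha, h.symm⟩⟩
  loopless := ⟨fun x ⟨_, _, h⟩ => G.ne_of_adj h rfl⟩

/-- The graph of `G`-non-edges inside `A`. -/
def Kg (G : SimpleGraph V) (A : Finset V) : SimpleGraph V where
  Adj x y := x ∈ A ∧ y ∈ A ∧ x ≠ y ∧ ¬ G.Adj x y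
  symm := ⟨fun _ _ ⟨ha, hb, hn, h⟩ => ⟨hb, ha, hn.symm, fun h' => h h'.symm⟩⟩
  loopless := ⟨fun _ ⟨_, _, hn, _⟩ => hn rfl⟩

lemma walk_closed {G' : SimpleGraph V} {U : Finset V}
    (hU : ∀ x ∈ U, ∀ y, G'.Adj x y → y ∈ U) :
    ∀ {x y : V}, G'.Walk x y → x ∈ U → y ∈ U := by
  intro x y w
  induction w with
  | nil => exact id
  | cons h _ ih => exact fun hx => ih (hU _ hx _ h)

lemma reach_closed {G' : SimpleGraph V} {U : Finset V}
    (hU : ∀ x ∈ U, ∀ y, G'.Adj x y → y ∈ U) {x y : V}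
    (h : G'.Reachable x y) (hx : x ∈ U) : y ∈ U :=
  h.elim fun w => walk_closed hU w hx

lemma exists_cross_edge {G' : SimpleGraph V} {x y : V} (h : G'.Reachable x y)
    (S : Set V) (hx : x ∈ S) (hy : y ∉ S) :
    ∃ u v, G'.Adj u v ∧ u ∈ S ∧ v ∉ S := by
  obtain ⟨w⟩ := h
  obtain ⟨d, _, h1, h2⟩ := w.exists_boundary_dart S hx hy
  exact ⟨d.fst, d.snd, d.adj, h1, h2⟩

/-- A connected set with no edges to the outside part splits. -/
lemma conn_subset_or {G : SimpleGraph V} {M C B : Finset V}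
    (hconn : (G.induce (M : Set V)).Connected)
    (hM : ∀ m ∈ M, m ∈ C ∨ m ∈ B)
    (hCB : ∀ c ∈ C, ∀ b ∈ B, ¬ G.Adj c b)
    (hdisj : ∀ c ∈ C, c ∉ B) :
    M ⊆ C ∨ M ⊆ B := by
  by_contra hcon
  push_neg at hcon
  obtain ⟨hc, hb⟩ := hcon
  obtain ⟨x, hxM, hxC⟩ := Finset.not_subset.mp hc
  obtain ⟨y, hyM, hyB⟩ := Finset.not_subset.mp hb
  have hxB : x ∈ B := (hM x hxM).resolve_left hxC
  have hyC : y ∈ C := (hM y hyM).resolve_right hyB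
  have hreach := hconn.preconnected ⟨y, Finset.mem_coe.mpr hyM⟩ ⟨x, Finset.mem_coe.mpr hxM⟩
  obtain ⟨w⟩ := hreach
  obtain ⟨d, _, h1, h2⟩ := w.exists_boundary_dart {v : (M : Set V) | (v : V) ∈ C} hyC
    (fun h => hdisj x h hxB)
  have hadj : G.Adj (d.fst : V) (d.snd : V) := d.adj
  have hsndB : (d.snd : V) ∈ B := (hM _ (Finset.mem_coe.mp d.snd.2)).resolve_left h2
  exact hCB _ h1 _ hsndB hadj

lemma module_restrict {G : SimpleGraph V} {A C M : Finset V} (hC : C ⊆ A) (hMC : M ⊆ C)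
    (hM : IsModuleOn G A M) : IsModuleOn G C M :=
  ⟨hM.1, hMC, fun u hu hnu => hM.2.2 u (hC hu) hnu⟩

lemma singleton_module {G : SimpleGraph V} {A : Finset V} {z : V} (hz : z ∈ A) :
    IsModuleOn G A {z} := by
  refine ⟨⟨z, Finset.mem_singleton_self z⟩, Finset.singleton_subset_iff.mpr hz, ?_⟩
  intro u _ _
  rcases em (G.Adj u z) with h | h
  · exact Or.inl fun v hv => by rwa [Finset.mem_singleton.mp hv]
  · exact Or.inr fun v hv => by rwa [Finset.mem_singleton.mp hv]

lemma module_union {G : SimpleGraph V} {A M M' : Finset V}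
    (hM : IsModuleOn G A M) (hM' : IsModuleOn G A M')
    {x : V} (hx : x ∈ M) (hx' : x ∈ M') : IsModuleOn G A (M ∪ M') := by
  refine ⟨⟨x, Finset.mem_union_left _ hx⟩, Finset.union_subset hM.2.1 hM'.2.1, ?_⟩
  intro u hu hnu
  have hnu1 : u ∉ M := fun h => hnu (Finset.mem_union_left _ h)
  have hnu2 : u ∉ M' := fun h => hnu (Finset.mem_union_right _ h)
  rcases hM.2.2 u hu hnu1 with h1 | h1 <;> rcases hM'.2.2 u hu hnu2 with h2 | h2
  · exact Or.inl fun v hv => (Finset.mem_union.mp hv).elim (h1 v) (h2 v)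
  · exact absurd (h1 x hx) (h2 x hx')
  · exact absurd (h2 x hx') (h1 x hx)
  · exact Or.inr fun v hv => (Finset.mem_union.mp hv).elim (h1 v) (h2 v)

/-- Key overlap lemma: if both `G` and its complement are connected on `A`, two proper
modules with a common point cannot cover `A`. -/
lemma no_spanning_overlap {G : SimpleGraph V} {A M M' : Finset V}
    (hL : ∀ x ∈ A, ∀ y ∈ A, (Lg G A).Reachable x y)
    (hK : ∀ x ∈ A, ∀ y ∈ A, (Kg G A).Reachable x y)
    (hM : IsModuleOn G A M) (hM' : IsModuleOn G A M')
    (hU : M ∪ M' = A) {x : V} (hx : x ∈ M) (hx' : x ∈ M')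
    (hMA : M ≠ A) (hM'A : M' ≠ A) : False := by
  have hMsubA := hM.2.1
  have hM'subA := hM'.2.1
  have hAeq : ∀ z ∈ A, z ∈ M ∨ z ∈ M' := by
    intro z hz; rw [← hU] at hz; exact Finset.mem_union.mp hz
  -- M \ M' nonempty
  obtain ⟨a₀, ha₀M, ha₀nM'⟩ : ∃ a, a ∈ M ∧ a ∉ M' := by
    by_contra h; push_neg at h
    exact hM'A (Finset.Subset.antisymm hM'subA (by
      intro z hz; rcases hAeq z hz with h1 | h1; exacts [h z h1, h1]))
  obtain ⟨b₀, hb₀M', hb₀nM⟩ : ∃ b, b ∈ M' ∧ b ∉ M := by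
    by_contra h; push_neg at h
    exact hMA (Finset.Subset.antisymm hMsubA (by
      intro z hz; rcases hAeq z hz with h1 | h1; exacts [h1, h z h1]))
  by_cases hcase : ∃ a ∈ M, a ∉ M' ∧ ∃ w ∈ M', G.Adj a w
  · obtain ⟨a₁, ha₁M, ha₁nM', w₁, hw₁, hadj⟩ := hcase
    have hA1 : ∀ v ∈ M', G.Adj a₁ v := by
      rcases hM'.2.2 a₁ (hMsubA ha₁M) ha₁nM' with h | h
      · exact h
      · exact absurd hadj (h w₁ hw₁)
    have hB : ∀ b ∈ M', b ∉ M → ∀ v ∈ M, G.Adj b v := by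
      intro b hbM' hbnM
      rcases hM.2.2 b (hM'subA hbM') hbnM with h | h
      · exact h
      · exact absurd (hA1 b hbM').symm (h a₁ ha₁M)
    have hA : ∀ a ∈ M, a ∉ M' → ∀ v ∈ M', G.Adj a v := by
      intro a haM hanM'
      rcases hM'.2.2 a (hMsubA haM) hanM' with h | h
      · exact h
      · exact absurd (hB b₀ hb₀M' hb₀nM a haM).symm (h b₀ hb₀M')
    -- every vertex in M ∩ M' is adjacent to every vertex outside of it (within A)
    have hcross : ∀ c, c ∈ M → c ∈ M' → ∀ z ∈ A, ¬(z ∈ M ∧ z ∈ M') → G.Adj c z := by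
      intro c hcM hcM' z hzA hz
      rcases hAeq z hzA with h1 | h1
      · have hznM' : z ∉ M' := fun h => hz ⟨h1, h⟩
        exact (hA z h1 hznM' c hcM').symm
      · have hznM : z ∉ M := fun h => hz ⟨h, h1⟩
        exact (hB z h1 hznM c hcM).symm
    -- contradiction with K-connectivity
    obtain ⟨u, v, hKadj, huS, hvS⟩ := exists_cross_edge
      (hK x (hMsubA hx) a₁ (hMsubA ha₁M)) {v : V | v ∈ M ∧ v ∈ M'} ⟨hx, hx'⟩
      (fun h => ha₁nM' h.2)
    exact hKadj.2.2.2 (hcross u huS.1 huS.2 v hKadj.2.1 hvS)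
  · push_neg at hcase
    -- no edges from M \ M' to M'; contradiction with L-connectivity
    obtain ⟨u, v, hLadj, huS, hvS⟩ := exists_cross_edge
      (hL a₀ (hMsubA ha₀M) x (hMsubA hx)) {v : V | v ∈ M ∧ v ∉ M'} ⟨ha₀M, ha₀nM'⟩
      (fun h => h.2 hx')
    have hvM' : v ∈ M' := by
      rcases hAeq v hLadj.2.1 with h1 | h1
      · by_contra h; exact hvS ⟨h1, h⟩
      · exact h1
    exact hcase u huS.1 huS.2 v hvM' hLadj.2.2

-- Maximal proper modules on `A`.
open Classical in
noncomputable def maxMods (G : SimpleGraph V) (A : Finset V) : Finset (Finset V) :=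
  A.powerset.filter (fun N => IsModuleOn G A N ∧ N ≠ A ∧
    ∀ M', IsModuleOn G A M' → M' ≠ A → N ⊆ M' → N = M')

open Classical in
lemma mem_maxMods {G : SimpleGraph V} {A N : Finset V} :
    N ∈ maxMods G A ↔ IsModuleOn G A N ∧ N ≠ A ∧
      ∀ M', IsModuleOn G A M' → M' ≠ A → N ⊆ M' → N = M' := by
  constructor
  · intro h; exact (Finset.mem_filter.mp h).2
  · intro h; exact Finset.mem_filter.mpr ⟨Finset.mem_powerset.mpr h.1.2.1, h⟩

open Classical in
lemma exists_maxMod {G : SimpleGraph V} {A M : Finset V}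
    (hM : IsModuleOn G A M) (hne : M ≠ A) :
    ∃ N ∈ maxMods G A, M ⊆ N := by
  classical
  set s : Finset (Finset V) :=
    A.powerset.filter (fun N => IsModuleOn G A N ∧ N ≠ A ∧ M ⊆ N) with hs
  have hMs : M ∈ s := by
    rw [hs]
    exact Finset.mem_filter.mpr ⟨Finset.mem_powerset.mpr hM.2.1, hM, hne, Finset.Subset.refl M⟩
  obtain ⟨N, hNs, hNmax⟩ := s.exists_max_image Finset.card ⟨M, hMs⟩
  obtain ⟨hN1, hN2, hN3, hN4⟩ : N ∈ A.powerset ∧ IsModuleOn G A N ∧ N ≠ A ∧ M ⊆ N := by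
    have := Finset.mem_filter.mp hNs; exact ⟨this.1, this.2.1, this.2.2.1, this.2.2.2⟩
  refine ⟨N, mem_maxMods.mpr ⟨hN2, hN3, ?_⟩, hN4⟩
  intro M' hM' hM'A hNM'
  have hM's : M' ∈ s := by
    rw [hs]
    exact Finset.mem_filter.mpr ⟨Finset.mem_powerset.mpr hM'.2.1, hM', hM'A, hN4.trans hNM'⟩
  exact Finset.eq_of_subset_of_card_le hNM' (hNmax M' hM's)

lemma maxMods_disj {G : SimpleGraph V} {A : Finset V}
    (hL : ∀ x ∈ A, ∀ y ∈ A, (Lg G A).Reachable x y)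
    (hK : ∀ x ∈ A, ∀ y ∈ A, (Kg G A).Reachable x y)
    {N N' : Finset V} (hN : N ∈ maxMods G A) (hN' : N' ∈ maxMods G A)
    (hne : N ≠ N') : ∀ x, x ∈ N → x ∈ N' → False := by
  intro x hx hx'
  obtain ⟨hNmod, hNA, hNmax⟩ := mem_maxMods.mp hN
  obtain ⟨hN'mod, hN'A, hN'max⟩ := mem_maxMods.mp hN'
  have hUmod : IsModuleOn G A (N ∪ N') := module_union hNmod hN'mod hx hx'
  by_cases hUA : N ∪ N' = A
  · exact no_spanning_overlap hL hK hNmod hN'mod hUA hx hx' hNA hN'A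
  · have h1 : N = N ∪ N' := hNmax _ hUmod hUA Finset.subset_union_left
    have h2 : N' ⊆ N := h1 ▸ Finset.subset_union_right
    exact hne ((hN'max N hNmod hNA h2).symm)

-- Subsets of `A` closed under non-adjacency (unions of anticomponents).
open Classical in
noncomputable def closedSets (G : SimpleGraph V) (A : Finset V) : Finset (Finset V) :=
  A.powerset.filter (fun U => ∀ x ∈ U, ∀ y, (Kg G A).Adj x y → y ∈ U)

open Classical in
lemma mem_closedSets {G : SimpleGraph V} {A U : Finset V} :
    U ∈ closedSets G A ↔ U ⊆ A ∧ ∀ x ∈ U, ∀ y, (Kg G A).Adj x y → y ∈ U := by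
  simp [closedSets, Finset.mem_filter, Finset.mem_powerset]

lemma anticomp_complete {G : SimpleGraph V} {A : Finset V} {a c b : V}
    (hcA : c ∈ A) (hbA : b ∈ A) (hc : (Kg G A).Reachable a c)
    (hb : ¬ (Kg G A).Reachable a b) : G.Adj c b := by
  by_contra hne
  have hcb : c ≠ b := by rintro rfl; exact hb hc
  exact hb (hc.trans (SimpleGraph.Adj.reachable ⟨hcA, hbA, hcb, hne⟩))

lemma closedSets_card (G : SimpleGraph V) :
    ∀ A : Finset V, ∀ j : ℕ,
      (∀ s : Finset V, s ⊆ A → G.IsClique ↑s → s.card ≤ j) →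
      (closedSets G A).card ≤ 2 ^ j := by
  classical
  intro A
  induction A using Finset.strongInduction with
  | _ A ih =>
    intro j hj
    rcases A.eq_empty_or_nonempty with rfl | ⟨a, ha⟩
    · have hsub : closedSets G ∅ ⊆ {∅} := by
        intro U hU
        have := (mem_closedSets.mp hU).1
        simp_all [Finset.subset_empty]
      calc (closedSets G ∅).card ≤ ({∅} : Finset (Finset V)).card := Finset.card_le_card hsub
        _ = 1 := Finset.card_singleton _
        _ ≤ 2 ^ j := Nat.one_le_two_pow
    · have hj1 : 1 ≤ j := by
        have := hj {a} (Finset.singleton_subset_iff.mpr ha) (by simp)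
        simpa using this
      set C := A.filter (fun v => (Kg G A).Reachable a v) with hCdef
      set B := A \ C with hBdef
      have hCA : C ⊆ A := Finset.filter_subset _ _
      have haC : a ∈ C := Finset.mem_filter.mpr ⟨ha, SimpleGraph.Reachable.refl a⟩
      have hBA : B ⊂ A := Finset.sdiff_ssubset hCA ⟨a, haC⟩
      have hjB : ∀ s : Finset V, s ⊆ B → G.IsClique ↑s → s.card ≤ j - 1 := by
        intro s hs hcl
        have hanotins : a ∉ s := fun h => (Finset.mem_sdiff.mp (hs h)).2 haC
        have hclins : G.IsClique ↑(insert a s) := by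
          rw [Finset.coe_insert]
          refine hcl.insert (fun b hb _ => ?_)
          have hbB := hs hb
          have hbA : b ∈ A := (Finset.mem_sdiff.mp hbB).1
          have hbnr : ¬ (Kg G A).Reachable a b := fun hr =>
            (Finset.mem_sdiff.mp hbB).2 (Finset.mem_filter.mpr ⟨hbA, hr⟩)
          exact anticomp_complete ha hbA (SimpleGraph.Reachable.refl a) hbnr
        have hsubA : insert a s ⊆ A :=
          Finset.insert_subset ha (hs.trans (Finset.sdiff_subset))
        have := hj _ hsubA hclins
        rw [Finset.card_insert_of_notMem hanotins] at this
        omega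
      have hBcard := ih B hBA (j - 1) hjB
      have hsub2 : closedSets G A ⊆ (closedSets G B).biUnion (fun W => {W, W ∪ C}) := by
        intro U hU
        obtain ⟨hUA, hUcl⟩ := mem_closedSets.mp hU
        have hWmem : U ∩ B ∈ closedSets G B := by
          refine mem_closedSets.mpr ⟨Finset.inter_subset_right, ?_⟩
          intro x hx y hy
          obtain ⟨hxB, hyB, hxy, hnadj⟩ := hy
          have hyA : (Kg G A).Adj x y :=
            ⟨(Finset.mem_sdiff.mp hxB).1, (Finset.mem_sdiff.mp hyB).1, hxy, hnadj⟩
          exact Finset.mem_inter.mpr ⟨hUcl x (Finset.mem_inter.mp hx).1 y hyA, hyB⟩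
        refine Finset.mem_biUnion.mpr ⟨U ∩ B, hWmem, ?_⟩
        by_cases hmeet : ∃ c, c ∈ U ∧ c ∈ C
        · have hCU : C ⊆ U := by
            obtain ⟨c, hcU, hcC⟩ := hmeet
            intro y hyC
            have h1 : (Kg G A).Reachable a c := (Finset.mem_filter.mp hcC).2
            have h2 : (Kg G A).Reachable a y := (Finset.mem_filter.mp hyC).2
            exact reach_closed hUcl (h1.symm.trans h2) hcU
          have hUeq : U = U ∩ B ∪ C := by
            ext z
            simp only [Finset.mem_union, Finset.mem_inter, hBdef, Finset.mem_sdiff]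
            constructor
            · intro hz
              by_cases hzc : z ∈ C
              · exact Or.inr hzc
              · exact Or.inl ⟨hz, hUA hz, hzc⟩
            · rintro (⟨hz, _⟩ | hzC)
              · exact hz
              · exact hCU hzC
          rw [Finset.mem_insert, Finset.mem_singleton]
          exact Or.inr hUeq
        · have hUeq : U = U ∩ B := by
            ext z
            simp only [Finset.mem_inter, hBdef, Finset.mem_sdiff]
            constructor
            · intro hz
              exact ⟨hz, hUA hz, fun hzC => hmeet ⟨z, hz, hzC⟩⟩
            · intro hz; exact hz.1
          rw [Finset.mem_insert, Finset.mem_singleton]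
          exact Or.inl hUeq
      calc (closedSets G A).card
          ≤ ((closedSets G B).biUnion (fun W => {W, W ∪ C})).card :=
            Finset.card_le_card hsub2
        _ ≤ ∑ W ∈ closedSets G B, ({W, W ∪ C} : Finset (Finset V)).card :=
            Finset.card_biUnion_le
        _ ≤ ∑ _W ∈ closedSets G B, 2 := Finset.sum_le_sum (fun W _ => Finset.card_insert_le _ _ |>.trans (by simp))
        _ = 2 * (closedSets G B).card := by rw [Finset.sum_const, smul_eq_mul, mul_comm]
        _ ≤ 2 * 2 ^ (j - 1) := Nat.mul_le_mul_left _ hBcard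
        _ = 2 ^ j := by
            rw [← pow_succ']
            congr 1
            omega

lemma crossing_closed {G : SimpleGraph V} {A C B M : Finset V}
    (hpart : ∀ z ∈ A, z ∈ C ∨ z ∈ B)
    (hcb : ∀ c ∈ C, ∀ b ∈ B, G.Adj c b)
    (hM : IsModuleOn G A M) (h1 : ∃ c ∈ M, c ∈ C) (h2 : ∃ b ∈ M, b ∈ B) :
    M ∈ closedSets G A := by
  refine mem_closedSets.mpr ⟨hM.2.1, ?_⟩
  intro x hx y hadj
  obtain ⟨hxA, hyA, hxy, hnadj⟩ := hadj
  by_contra hyM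
  have huni := hM.2.2 y hyA hyM
  have hyedge : ∃ b ∈ M, G.Adj y b := by
    rcases hpart y hyA with hyC | hyB
    · obtain ⟨b, hbM, hbB⟩ := h2
      exact ⟨b, hbM, hcb y hyC b hbB⟩
    · obtain ⟨c, hcM, hcC⟩ := h1
      exact ⟨c, hcM, (hcb c hcC y hyB).symm⟩
  obtain ⟨b, hbM, hyb⟩ := hyedge
  rcases huni with h | h
  · exact hnadj (h x hx).symm
  · exact h b hbM hyb

lemma arith_split (k c b : ℕ) (hc : 1 ≤ c) (hb : 1 ≤ b) :
    2 ^ k * (2 * c - 1) + 2 ^ k * (2 * b - 1) ≤ 2 ^ k * (2 * (c + b) - 1) := by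
  rw [← Nat.mul_add]
  exact Nat.mul_le_mul_left _ (by omega)

lemma arith_split' (k c b : ℕ) (hc : 1 ≤ c) (hb : 1 ≤ b) :
    2 ^ k * (2 * c - 1) + 2 ^ k * (2 * b - 1) + 2 ^ k ≤ 2 ^ k * (2 * (c + b) - 1) := by
  have : 2 ^ k * (2 * c - 1) + 2 ^ k * (2 * b - 1) + 2 ^ k
      = 2 ^ k * ((2 * c - 1) + (2 * b - 1) + 1) := by ring
  rw [this]
  exact Nat.mul_le_mul_left _ (by omega)

lemma connMods_card (G : SimpleGraph V) (k : ℕ)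
    (hk : ∀ s : Finset V, G.IsClique ↑s → s.card ≤ k) :
    ∀ A : Finset V, (connMods G A).card ≤ 2 ^ k * (2 * A.card - 1) := by
  classical
  intro A
  induction A using Finset.strongInduction with
  | _ A ih =>
    rcases A.eq_empty_or_nonempty with rfl | ⟨a, ha⟩
    · have : connMods G ∅ = ∅ := by
        apply Finset.eq_empty_of_forall_notMem
        intro M hM
        obtain ⟨hMA, hmod, _⟩ := mem_connMods.mp hM
        obtain ⟨z, hz⟩ := hmod.1
        exact absurd (hMA hz) (Finset.notMem_empty z)
      simp [this]
    · set C₁ := A.filter (fun v => (Lg G A).Reachable a v) with hC₁def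
      by_cases hLfull : A ⊆ C₁
      · -- G connected on A
        set C₂ := A.filter (fun v => (Kg G A).Reachable a v) with hC₂def
        by_cases hKfull : A ⊆ C₂
        · -- complement also connected on A
          by_cases hA1 : A.card ≤ 1
          · have hsub : connMods G A ⊆ {A} := by
              intro M hM
              obtain ⟨hMA, hmod, _⟩ := mem_connMods.mp hM
              have hM1 : 1 ≤ M.card := Finset.card_pos.mpr hmod.1
              have : M = A := Finset.eq_of_subset_of_card_le hMA (by omega)
              simp [this]
            have hAcard : A.card = 1 := by
              have := Finset.card_pos.mpr ⟨a, ha⟩; omega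
            calc (connMods G A).card ≤ 1 := by
                  simpa using Finset.card_le_card hsub
              _ ≤ 2 ^ k * (2 * A.card - 1) := by
                  rw [hAcard]; simpa using Nat.one_le_two_pow
          · -- A.card ≥ 2, the prime-ish case
            have hL' : ∀ x ∈ A, ∀ y ∈ A, (Lg G A).Reachable x y := by
              intro x hx y hy
              have h1 : (Lg G A).Reachable a x := (Finset.mem_filter.mp (hLfull hx)).2
              have h2 : (Lg G A).Reachable a y := (Finset.mem_filter.mp (hLfull hy)).2
              exact h1.symm.trans h2
            have hK' : ∀ x ∈ A, ∀ y ∈ A, (Kg G A).Reachable x y := by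
              intro x hx y hy
              have h1 : (Kg G A).Reachable a x := (Finset.mem_filter.mp (hKfull hx)).2
              have h2 : (Kg G A).Reachable a y := (Finset.mem_filter.mp (hKfull hy)).2
              exact h1.symm.trans h2
            -- covering
            have hcover : ∀ z ∈ A, ∃ N ∈ maxMods G A, z ∈ N := by
              intro z hz
              have hne : ({z} : Finset V) ≠ A := by
                intro h
                rw [← h] at hA1
                simp at hA1
              obtain ⟨N, hN, hzN⟩ := exists_maxMod (singleton_module hz) hne
              exact ⟨N, hN, hzN (Finset.mem_singleton_self z)⟩
            -- at least two maximal modules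
            have hM2 : 2 ≤ (maxMods G A).card := by
              by_contra hlt
              push_neg at hlt
              obtain ⟨N₀, hN₀, haN₀⟩ := hcover a ha
              have h1 : (maxMods G A).card = 1 := by
                have : 1 ≤ (maxMods G A).card := Finset.card_pos.mpr ⟨N₀, hN₀⟩
                omega
              obtain ⟨N₁, hN₁⟩ := Finset.card_eq_one.mp h1
              have hAN : A ⊆ N₁ := by
                intro z hz
                obtain ⟨N, hN, hzN⟩ := hcover z hz
                rw [hN₁, Finset.mem_singleton] at hN
                rwa [← hN]
              have hN₁mem : N₁ ∈ maxMods G A := by rw [hN₁]; exact Finset.mem_singleton_self _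
              obtain ⟨hN₁mod, hN₁A, _⟩ := mem_maxMods.mp hN₁mem
              exact hN₁A (Finset.Subset.antisymm hN₁mod.2.1 hAN)
            -- subset into biUnion
            have hsub : connMods G A ⊆
                insert A ((maxMods G A).biUnion (fun N => connMods G N)) := by
              intro M hM
              obtain ⟨hMA, hmod, hconn⟩ := mem_connMods.mp hM
              by_cases hMeq : M = A
              · rw [hMeq]; exact Finset.mem_insert_self _ _
              · obtain ⟨N, hN, hMN⟩ := exists_maxMod hmod hMeq
                refine Finset.mem_insert.mpr (Or.inr (Finset.mem_biUnion.mpr ⟨N, hN, ?_⟩))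
                exact mem_connMods.mpr
                  ⟨hMN, module_restrict (mem_maxMods.mp hN).1.2.1 hMN hmod, hconn⟩
            -- disjointness and size sums
            have hdisj : ∀ N ∈ maxMods G A, ∀ N' ∈ maxMods G A, N ≠ N' → Disjoint N N' := by
              intro N hN N' hN' hne
              rw [Finset.disjoint_left]
              intro x hx hx'
              exact maxMods_disj hL' hK' hN hN' hne x hx hx'
            have hsumcard : ∑ N ∈ maxMods G A, N.card ≤ A.card := by
              rw [← Finset.card_biUnion hdisj]
              apply Finset.card_le_card
              intro z hz
              obtain ⟨N, hN, hzN⟩ := Finset.mem_biUnion.mp hz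
              exact (mem_maxMods.mp hN).1.2.1 hzN
            have hsum1 : ∑ N ∈ maxMods G A, (2 * N.card - 1) + (maxMods G A).card
                = ∑ N ∈ maxMods G A, 2 * N.card := by
              rw [Finset.card_eq_sum_ones, ← Finset.sum_add_distrib]
              apply Finset.sum_congr rfl
              intro N hN
              have : 1 ≤ N.card := Finset.card_pos.mpr (mem_maxMods.mp hN).1.1
              omega
            have hsum2 : ∑ N ∈ maxMods G A, 2 * N.card
                = 2 * ∑ N ∈ maxMods G A, N.card := by
              rw [Finset.mul_sum]
            have hsumle : ∑ N ∈ maxMods G A, (2 * N.card - 1) ≤ 2 * A.card - 2 := by omega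
            -- combine
            have heach : ∀ N ∈ maxMods G A, (connMods G N).card ≤ 2 ^ k * (2 * N.card - 1) := by
              intro N hN
              obtain ⟨hNmod, hNA, _⟩ := mem_maxMods.mp hN
              exact ih N (Finset.ssubset_iff_subset_ne.mpr ⟨hNmod.2.1, hNA⟩)
            calc (connMods G A).card
                ≤ (insert A ((maxMods G A).biUnion (fun N => connMods G N))).card :=
                  Finset.card_le_card hsub
              _ ≤ ((maxMods G A).biUnion (fun N => connMods G N)).card + 1 :=
                  Finset.card_insert_le _ _
              _ ≤ (∑ N ∈ maxMods G A, (connMods G N).card) + 1 :=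
                  Nat.add_le_add_right Finset.card_biUnion_le 1
              _ ≤ (∑ N ∈ maxMods G A, 2 ^ k * (2 * N.card - 1)) + 1 :=
                  Nat.add_le_add_right (Finset.sum_le_sum heach) 1
              _ = 2 ^ k * (∑ N ∈ maxMods G A, (2 * N.card - 1)) + 1 := by
                  rw [Finset.mul_sum]
              _ ≤ 2 ^ k * (2 * A.card - 2) + 1 :=
                  Nat.add_le_add_right (Nat.mul_le_mul_left _ hsumle) 1
              _ ≤ 2 ^ k * (2 * A.card - 1) := by
                  have h2k : 1 ≤ 2 ^ k := Nat.one_le_two_pow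
                  have hA2 : 2 ≤ A.card := by omega
                  have : 2 * A.card - 1 = (2 * A.card - 2) + 1 := by omega
                  rw [this, Nat.mul_add, Nat.mul_one]
                  omega
        · -- complement disconnected on A: case (b)
          set B := A \ C₂ with hBdef
          have hCA : C₂ ⊆ A := Finset.filter_subset _ _
          have haC : a ∈ C₂ := Finset.mem_filter.mpr ⟨ha, SimpleGraph.Reachable.refl a⟩
          have hBne : B.Nonempty := by
            obtain ⟨z, hz, hznC⟩ := Finset.not_subset.mp hKfull
            exact ⟨z, Finset.mem_sdiff.mpr ⟨hz, hznC⟩⟩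
          have hCssub : C₂ ⊂ A := by
            obtain ⟨z, hz⟩ := hBne
            exact Finset.ssubset_iff_of_subset hCA |>.mpr
              ⟨z, (Finset.mem_sdiff.mp hz).1, (Finset.mem_sdiff.mp hz).2⟩
          have hBssub : B ⊂ A := Finset.sdiff_ssubset hCA ⟨a, haC⟩
          have hcb : ∀ c ∈ C₂, ∀ b ∈ B, G.Adj c b := by
            intro c hc b hb
            have hcA : c ∈ A := (Finset.mem_filter.mp hc).1
            have hbA : b ∈ A := (Finset.mem_sdiff.mp hb).1
            have hbnr : ¬ (Kg G A).Reachable a b := fun hr =>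
              (Finset.mem_sdiff.mp hb).2 (Finset.mem_filter.mpr ⟨hbA, hr⟩)
            exact anticomp_complete hcA hbA (Finset.mem_filter.mp hc).2 hbnr
          have hpart : ∀ z ∈ A, z ∈ C₂ ∨ z ∈ B := by
            intro z hz
            by_cases h : z ∈ C₂
            · exact Or.inl h
            · exact Or.inr (Finset.mem_sdiff.mpr ⟨hz, h⟩)
          have hsub : connMods G A ⊆ connMods G C₂ ∪ connMods G B ∪ closedSets G A := by
            intro M hM
            obtain ⟨hMA, hmod, hconn⟩ := mem_connMods.mp hM
            by_cases h1 : M ⊆ C₂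
            · exact Finset.mem_union.mpr (Or.inl (Finset.mem_union.mpr (Or.inl
                (mem_connMods.mpr ⟨h1, module_restrict hCA h1 hmod, hconn⟩))))
            · by_cases h2 : M ⊆ B
              · exact Finset.mem_union.mpr (Or.inl (Finset.mem_union.mpr (Or.inr
                  (mem_connMods.mpr ⟨h2, module_restrict (Finset.sdiff_subset) h2 hmod, hconn⟩))))
              · -- crossing
                obtain ⟨x, hxM, hxnC⟩ := Finset.not_subset.mp h1
                obtain ⟨y, hyM, hynB⟩ := Finset.not_subset.mp h2
                have hxB : x ∈ B := (hpart x (hMA hxM)).resolve_left hxnC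
                have hyC : y ∈ C₂ := (hpart y (hMA hyM)).resolve_right hynB
                exact Finset.mem_union.mpr (Or.inr
                  (crossing_closed hpart hcb hmod ⟨y, hyM, hyC⟩ ⟨x, hxM, hxB⟩))
          have hclosed : (closedSets G A).card ≤ 2 ^ k :=
            closedSets_card G A k (fun s _ hs => hk s hs)
          have hc1 : 1 ≤ C₂.card := Finset.card_pos.mpr ⟨a, haC⟩
          have hb1 : 1 ≤ B.card := Finset.card_pos.mpr hBne
          have hcbcard : C₂.card + B.card = A.card := by
            rw [hBdef, Finset.card_sdiff_of_subset hCA]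
            have := Finset.card_le_card hCA
            omega
          calc (connMods G A).card
              ≤ (connMods G C₂ ∪ connMods G B ∪ closedSets G A).card :=
                Finset.card_le_card hsub
            _ ≤ (connMods G C₂ ∪ connMods G B).card + (closedSets G A).card :=
                Finset.card_union_le _ _
            _ ≤ (connMods G C₂).card + (connMods G B).card + (closedSets G A).card :=
                Nat.add_le_add_right (Finset.card_union_le _ _) _
            _ ≤ 2 ^ k * (2 * C₂.card - 1) + 2 ^ k * (2 * B.card - 1) + 2 ^ k :=
                Nat.add_le_add (Nat.add_le_add (ih C₂ hCssub) (ih B hBssub)) hclosed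
            _ ≤ 2 ^ k * (2 * (C₂.card + B.card) - 1) := arith_split' k _ _ hc1 hb1
            _ = 2 ^ k * (2 * A.card - 1) := by rw [hcbcard]
      · -- G disconnected on A: case (a)
        set B := A \ C₁ with hBdef
        have hCA : C₁ ⊆ A := Finset.filter_subset _ _
        have haC : a ∈ C₁ := Finset.mem_filter.mpr ⟨ha, SimpleGraph.Reachable.refl a⟩
        have hBne : B.Nonempty := by
          obtain ⟨z, hz, hznC⟩ := Finset.not_subset.mp hLfull
          exact ⟨z, Finset.mem_sdiff.mpr ⟨hz, hznC⟩⟩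
        have hCssub : C₁ ⊂ A := by
          obtain ⟨z, hz⟩ := hBne
          exact Finset.ssubset_iff_of_subset hCA |>.mpr
            ⟨z, (Finset.mem_sdiff.mp hz).1, (Finset.mem_sdiff.mp hz).2⟩
        have hBssub : B ⊂ A := Finset.sdiff_ssubset hCA ⟨a, haC⟩
        have hCB : ∀ c ∈ C₁, ∀ b ∈ B, ¬ G.Adj c b := by
          intro c hc b hb hadj
          have hcA : c ∈ A := (Finset.mem_filter.mp hc).1
          have hbA : b ∈ A := (Finset.mem_sdiff.mp hb).1
          have : (Lg G A).Adj c b := ⟨hcA, hbA, hadj⟩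
          exact (Finset.mem_sdiff.mp hb).2 (Finset.mem_filter.mpr
            ⟨hbA, ((Finset.mem_filter.mp hc).2).trans this.reachable⟩)
        have hpart : ∀ z ∈ A, z ∈ C₁ ∨ z ∈ B := by
          intro z hz
          by_cases h : z ∈ C₁
          · exact Or.inl h
          · exact Or.inr (Finset.mem_sdiff.mpr ⟨hz, h⟩)
        have hdisj2 : ∀ c ∈ C₁, c ∉ B := fun c hc hcB => (Finset.mem_sdiff.mp hcB).2 hc
        have hsub : connMods G A ⊆ connMods G C₁ ∪ connMods G B := by
          intro M hM
          obtain ⟨hMA, hmod, hconn⟩ := mem_connMods.mp hM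
          rcases conn_subset_or hconn (fun m hm => hpart m (hMA hm)) hCB hdisj2 with h | h
          · exact Finset.mem_union.mpr (Or.inl
              (mem_connMods.mpr ⟨h, module_restrict hCA h hmod, hconn⟩))
          · exact Finset.mem_union.mpr (Or.inr
              (mem_connMods.mpr ⟨h, module_restrict (Finset.sdiff_subset) h hmod, hconn⟩))
        have hc1 : 1 ≤ C₁.card := Finset.card_pos.mpr ⟨a, haC⟩
        have hb1 : 1 ≤ B.card := Finset.card_pos.mpr hBne
        have hcbcard : C₁.card + B.card = A.card := by
          rw [hBdef, Finset.card_sdiff_of_subset hCA]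
          have := Finset.card_le_card hCA
          omega
        calc (connMods G A).card
            ≤ (connMods G C₁ ∪ connMods G B).card := Finset.card_le_card hsub
          _ ≤ (connMods G C₁).card + (connMods G B).card := Finset.card_union_le _ _
          _ ≤ 2 ^ k * (2 * C₁.card - 1) + 2 ^ k * (2 * B.card - 1) :=
              Nat.add_le_add (ih C₁ hCssub) (ih B hBssub)
          _ ≤ 2 ^ k * (2 * (C₁.card + B.card) - 1) := arith_split k _ _ hc1 hb1
          _ = 2 ^ k * (2 * A.card - 1) := by rw [hcbcard]

end ConnModsAux

/-- An n-vertex graph of clique number at most k contains at most 2^k * (2n - 1)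
connected modules. -/
theorem connected_modules_card_le (G : SimpleGraph V) (k : ℕ)
    (hk : G.cliqueNum ≤ k) :
    {M : Finset V | IsModuleOn G Finset.univ M ∧ (G.induce (M : Set V)).Connected}.ncard ≤
      2 ^ k * (2 * Fintype.card V - 1) := by
  classical
  have hset : {M : Finset V | IsModuleOn G Finset.univ M ∧ (G.induce (M : Set V)).Connected}
      = ↑(ConnModsAux.connMods G Finset.univ) := by
    ext M
    simp [ConnModsAux.mem_connMods, Finset.subset_univ]
  rw [hset, Set.ncard_coe_finset]
  have hk' : ∀ s : Finset V, G.IsClique ↑s → s.card ≤ k := fun s hs =>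
    le_trans (SimpleGraph.IsClique.card_le_cliqueNum (tc := hs)) hk
  simpa [Finset.card_univ] using ConnModsAux.connMods_card G k hk' Finset.univ
end

section
/- If the complement of the induced subgraph G[A] is disconnected, then the connected components of the complement of G[A] are exactly the maximal proper strong modules of G[A]. -/
variable {V : Type*} [Fintype V] [DecidableEq V]

open scoped Classical

section Helpers

variable {G H : SimpleGraph V} {A C D M : Finset V}

/-- Membership in a closed set propagates along walks in an induced subgraph. -/
lemma walk_mem_closed (hcl : ∀ u ∈ C, ∀ v ∈ A, H.Adj u v → v ∈ C)
    {S : Set V} (hS : S ⊆ (↑A : Set V)) :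
    ∀ {a b : S}, (H.induce S).Walk a b → (a : V) ∈ C → (b : V) ∈ C := by
  intro a b w
  induction w with
  | nil => exact id
  | @cons x y z h p ih =>
      intro ha
      exact ih (hcl _ ha _ (Finset.mem_coe.mp (hS y.2)) h)

/-- Walks in the induced subgraph on `A` starting at a point of a closed set `C`
transfer to reachability in the induced subgraph on `C`. -/
lemma walk_transfer (hcl : ∀ u ∈ C, ∀ v ∈ A, H.Adj u v → v ∈ C) :
    ∀ {a b : (↑A : Set V)}, (H.induce (↑A : Set V)).Walk a b → ∀ ha : (a : V) ∈ C,
      ∃ hb : (b : V) ∈ C,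
        (H.induce (↑C : Set V)).Reachable ⟨a, Finset.mem_coe.mpr ha⟩
          ⟨b, Finset.mem_coe.mpr hb⟩ := by
  intro a b w
  induction w with
  | nil => exact fun ha => ⟨ha, SimpleGraph.Reachable.refl _⟩
  | @cons x y z h p ih =>
      intro ha
      have hy : (y : V) ∈ C := hcl _ ha _ (Finset.mem_coe.mp y.2) h
      obtain ⟨hb, r⟩ := ih hy
      refine ⟨hb, SimpleGraph.Reachable.trans ?_ r⟩
      exact SimpleGraph.Adj.reachable
        (show H.Adj (x : V) (y : V) from h)

/-- The connected component of `v` in the induced subgraph on `A`. -/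
noncomputable def compOf (H : SimpleGraph V) (A : Finset V) {v : V} (hv : v ∈ A) :
    Finset V :=
  A.filter (fun w => ∃ hw : w ∈ A,
    (H.induce (↑A : Set V)).Reachable ⟨v, Finset.mem_coe.mpr hv⟩ ⟨w, Finset.mem_coe.mpr hw⟩)

lemma mem_compOf_self {v : V} (hv : v ∈ A) : v ∈ compOf H A hv :=
  Finset.mem_filter.mpr ⟨hv, hv, SimpleGraph.Reachable.refl _⟩

lemma compOf_closed {v : V} (hv : v ∈ A) :
    ∀ u ∈ compOf H A hv, ∀ w ∈ A, H.Adj u w → w ∈ compOf H A hv := by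
  intro u hu w hw hadj
  obtain ⟨huA, huA', hr⟩ := Finset.mem_filter.mp hu
  refine Finset.mem_filter.mpr ⟨hw, hw, hr.trans ?_⟩
  exact SimpleGraph.Adj.reachable
    (show H.Adj ((⟨u, Finset.mem_coe.mpr huA'⟩ : (↑A : Set V)) : V)
      ((⟨w, Finset.mem_coe.mpr hw⟩ : (↑A : Set V)) : V) from hadj)

lemma compOf_isCompOf {v : V} (hv : v ∈ A) : IsCompOf H A (compOf H A hv) := by
  refine ⟨⟨v, mem_compOf_self hv⟩, Finset.filter_subset _ _, ?_, compOf_closed hv⟩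
  rw [SimpleGraph.connected_iff]
  constructor
  · intro a b
    obtain ⟨haA, haA', ra⟩ := Finset.mem_filter.mp (Finset.mem_coe.mp a.2)
    obtain ⟨hbA, hbA', rb⟩ := Finset.mem_filter.mp (Finset.mem_coe.mp b.2)
    obtain ⟨wa⟩ := ra
    obtain ⟨wb⟩ := rb
    obtain ⟨ha', r1⟩ := walk_transfer (compOf_closed hv) wa (mem_compOf_self hv)
    obtain ⟨hb', r2⟩ := walk_transfer (compOf_closed hv) wb (mem_compOf_self hv)
    have e1 : (⟨(v : V), Finset.mem_coe.mpr (mem_compOf_self hv)⟩ :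
        (↑(compOf H A hv) : Set V)) = ⟨v, Finset.mem_coe.mpr (mem_compOf_self hv)⟩ := rfl
    have ea : (⟨(a : V), Finset.mem_coe.mpr ha'⟩ : (↑(compOf H A hv) : Set V)) = a :=
      Subtype.ext rfl
    have eb : (⟨(b : V), Finset.mem_coe.mpr hb'⟩ : (↑(compOf H A hv) : Set V)) = b :=
      Subtype.ext rfl
    rw [ea] at r1
    rw [eb] at r2
    exact r1.symm.trans r2
  · exact ⟨⟨v, Finset.mem_coe.mpr (mem_compOf_self hv)⟩⟩

/-- Two components sharing a vertex are equal. -/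
lemma IsCompOf.eq_of_mem (h1 : IsCompOf H A C) (h2 : IsCompOf H A D) {x : V}
    (hx1 : x ∈ C) (hx2 : x ∈ D) : C = D := by
  have key : ∀ (C D : Finset V), IsCompOf H A C → IsCompOf H A D →
      x ∈ C → x ∈ D → C ⊆ D := by
    intro C D h1 h2 hx1 hx2 w hw
    obtain ⟨r⟩ := h1.2.2.1.preconnected ⟨x, Finset.mem_coe.mpr hx1⟩ ⟨w, Finset.mem_coe.mpr hw⟩
    exact walk_mem_closed h2.2.2.2 (fun y hy => h1.2.1 (Finset.mem_coe.mp hy)) r hx2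
  exact Finset.Subset.antisymm (key C D h1 h2 hx1 hx2) (key D C h2 h1 hx2 hx1)

/-- A vertex of `A` outside a co-component is `G`-adjacent to all of it. -/
lemma adj_of_not_mem_comp (h : IsCompOf Gᶜ A C) {u v : V} (hu : u ∈ A) (huC : u ∉ C)
    (hv : v ∈ C) : G.Adj u v := by
  by_contra hadj
  have hne : v ≠ u := fun e => huC (e ▸ hv)
  exact huC (h.2.2.2 v hv u hu ((SimpleGraph.compl_adj _ _ _).mpr ⟨hne, fun h' => hadj h'.symm⟩))

/-- A co-component is a module. -/
lemma module_of_comp (h : IsCompOf Gᶜ A C) : IsModuleOn G A C :=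
  ⟨h.1, h.2.1, fun u hu huC => Or.inl fun v hv => adj_of_not_mem_comp h hu huC hv⟩

/-- The union of two co-components is a module. -/
lemma module_of_comp_union (h1 : IsCompOf Gᶜ A C) (h2 : IsCompOf Gᶜ A D) :
    IsModuleOn G A (C ∪ D) := by
  refine ⟨h1.1.mono Finset.subset_union_left, Finset.union_subset h1.2.1 h2.2.1, ?_⟩
  intro u hu huCD
  refine Or.inl fun v hv => ?_
  rcases Finset.mem_union.mp hv with hvC | hvD
  · exact adj_of_not_mem_comp h1 hu (fun h => huCD (Finset.mem_union_left _ h)) hvC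
  · exact adj_of_not_mem_comp h2 hu (fun h => huCD (Finset.mem_union_right _ h)) hvD

/-- Forward direction: a co-component is a maximal proper strong module. -/
lemma comp_isMaxProperStrong (hdisc : ¬ ((Gᶜ).induce (A : Set V)).Connected)
    (hC : IsCompOf Gᶜ A C) : IsMaxProperStrongOn G A C := by
  obtain ⟨hCne, hCA, hCconn, hCcl⟩ := hC
  have hCfull : IsCompOf Gᶜ A C := ⟨hCne, hCA, hCconn, hCcl⟩
  have hCneA : C ≠ A := by
    intro e
    exact hdisc (by rw [← e]; exact hCconn)
  refine ⟨⟨module_of_comp hCfull, ?_⟩, hCneA, ?_⟩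
  · -- strongness
    intro M' hM'
    by_contra hcon
    push_neg at hcon
    obtain ⟨hnCM, hnMC, hndisj⟩ := hcon
    obtain ⟨y, hyC, hyM⟩ := Finset.not_subset.mp hnCM
    obtain ⟨z, hzM, hzC⟩ := Finset.not_subset.mp hnMC
    obtain ⟨x, hxC, hxM⟩ := Finset.not_disjoint_iff.mp hndisj
    obtain ⟨p⟩ := hCconn.preconnected ⟨x, Finset.mem_coe.mpr hxC⟩ ⟨y, Finset.mem_coe.mpr hyC⟩
    obtain ⟨d, _, hdf, hds⟩ := p.exists_boundary_dart
      (Subtype.val ⁻¹' (↑M' : Set V)) hxM hyM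
    have hadj : (Gᶜ).Adj ((d.fst : V)) ((d.snd : V)) := d.adj
    have hqA : (d.snd : V) ∈ A := hCA (Finset.mem_coe.mp d.snd.2)
    rcases hM'.2.2 (d.snd : V) hqA hds with hall | hnone
    · exact ((SimpleGraph.compl_adj _ _ _).mp hadj).2 (hall _ hdf).symm
    · have hzA : z ∈ A := hM'.2.1 hzM
      have : G.Adj z (d.snd : V) :=
        adj_of_not_mem_comp hCfull hzA hzC (Finset.mem_coe.mp d.snd.2)
      exact hnone z hzM this.symm
  · -- maximality
    intro M' hM' hM'A hCM'
    by_contra hne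
    obtain ⟨z, hzM, hzC⟩ := Finset.exists_of_ssubset (lt_of_le_of_ne hCM' hne)
    have hzA : z ∈ A := hM'.1.2.1 hzM
    have hD := compOf_isCompOf (H := Gᶜ) hzA
    set D := compOf Gᶜ A hzA with hDdef
    have hzD : z ∈ D := mem_compOf_self hzA
    rcases hM'.2 D (module_of_comp hD) with hMD | hDM | hdisj
    · -- M' ⊆ D, so C ⊆ D, so C = D, but z ∈ D \ C : contradiction
      obtain ⟨x, hxC⟩ := hCne
      have : C = D := hCfull.eq_of_mem hD hxC (hMD (hCM' hxC))
      exact hzC (this ▸ hzD)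
    · -- D ⊆ M'
      obtain ⟨w, hwA, hwM⟩ := Finset.exists_of_ssubset
        (lt_of_le_of_ne hM'.1.2.1 hM'A)
      have hE := compOf_isCompOf (H := Gᶜ) hwA
      set E := compOf Gᶜ A hwA with hEdef
      have hwE : w ∈ E := mem_compOf_self hwA
      have hEM : Disjoint E M' := by
        rcases hM'.2 E (module_of_comp hE) with h1 | h1 | h1
        · obtain ⟨x, hxC⟩ := hCne
          have hCE : C = E := hCfull.eq_of_mem hE hxC (h1 (hCM' hxC))
          exact absurd (hCM' (hCE.symm ▸ hwE : w ∈ C)) hwM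
        · exact absurd (h1 hwE) hwM
        · exact h1.symm
      have hN : IsModuleOn G A (C ∪ E) := module_of_comp_union hCfull hE
      rcases hM'.2 (C ∪ E) hN with h1 | h1 | h1
      · -- M' ⊆ C ∪ E : z ∈ C ∪ E, z ∉ C so z ∈ E, contradicting disjointness
        rcases Finset.mem_union.mp (h1 hzM) with h | h
        · exact hzC h
        · exact (Finset.disjoint_left.mp hEM h) hzM
      · -- C ∪ E ⊆ M' : w ∈ M', contradiction
        exact hwM (h1 (Finset.mem_union_right _ hwE))
      · -- Disjoint M' (C ∪ E) : but C ⊆ M' and C nonempty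
        obtain ⟨x, hxC⟩ := hCne
        exact (Finset.disjoint_left.mp h1 (hCM' hxC)) (Finset.mem_union_left _ hxC)
    · exact (Finset.disjoint_left.mp hdisj hzM) hzD

end Helpers

/-- If the complement of G[A] is disconnected, then the connected components of the
complement of G[A] are exactly the maximal proper strong modules of G[A]. -/
theorem coComponents_eq_maxProperStrong (G : SimpleGraph V) (A : Finset V)
    (hA : 2 ≤ A.card) (hdisc : ¬ ((Gᶜ).induce (A : Set V)).Connected) :
    ∀ C : Finset V, IsCompOf Gᶜ A C ↔ IsMaxProperStrongOn G A C := by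
  intro C
  constructor
  · exact comp_isMaxProperStrong hdisc
  · rintro ⟨⟨Mmod, Mstrong⟩, MneA, Mmax⟩
    obtain ⟨v, hvM⟩ := Mmod.1
    have hvA : v ∈ A := Mmod.2.1 hvM
    have hD := compOf_isCompOf (H := Gᶜ) hvA
    set D := compOf Gᶜ A hvA with hDdef
    have hvD : v ∈ D := mem_compOf_self hvA
    have hDmax := comp_isMaxProperStrong hdisc hD
    rcases Mstrong D (module_of_comp hD) with h1 | h1 | h1
    · have : C = D := Mmax D hDmax.1 hDmax.2.1 h1
      exact this ▸ hD
    · have : D = C := hDmax.2.2 C ⟨Mmod, Mstrong⟩ MneA h1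
      exact this ▸ hD
    · exact absurd hvD (Finset.disjoint_left.mp h1 hvM)
end

section
/- Let G be a P_6-free graph of clique number at most k where k ≥ 2, let X be a minimal separator in G, and let A and B be two distinct full components of X. Then there exists a set Q ⊆ A with |Q| ≤ k such that every vertex of X not in N(Q) is adjacent to all vertices of B. -/
set_option linter.unusedSectionVars false
set_option linter.unnecessarySimpa false
set_option maxHeartbeats 1000000

variable {V : Type*} [Fintype V] [DecidableEq V]

/-- Propagate a property along walks in an induced subgraph. -/
lemma walk_prop {G : SimpleGraph V} {S : Set V} (P : S → Prop)
    (hP : ∀ u v : S, G.Adj u v → P u → P v) :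
    ∀ {a b : S}, (G.induce S).Walk a b → P a → P b := by
  intro a b w
  induction w with
  | nil => exact id
  | cons h' p ih => exact fun ha => ih (hP _ _ h' ha)

/-- Along a walk from a neighbor of `x` to a non-neighbor of `x`, there is an
edge from a neighbor of `x` to a non-neighbor of `x`. -/
lemma xFrontier {G : SimpleGraph V} {S : Set V} {x : V} :
    ∀ {a b : S}, (G.induce S).Walk a b → G.Adj x a → ¬ G.Adj x b →
      ∃ v1 v2 : V, v1 ∈ S ∧ v2 ∈ S ∧ G.Adj x v1 ∧ G.Adj v1 v2 ∧ ¬ G.Adj x v2 := by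
  intro a b w
  induction w with
  | nil => intro h1 h2; exact absurd h1 h2
  | @cons u v w h p ih =>
      intro hxu hxw
      by_cases hxv : G.Adj x v
      · exact ih hxv hxw
      · exact ⟨u, v, u.2, v.2, hxu, h, hxv⟩

lemma comp_eq_of_mem {G : SimpleGraph V} {S A B : Finset V}
    (hA : IsCompOf G S A) (hB : IsCompOf G S B) {v : V}
    (hvA : v ∈ A) (hvB : v ∈ B) : A = B := by
  have key : ∀ (A B : Finset V), IsCompOf G S A → IsCompOf G S B →
      v ∈ A → v ∈ B → A ⊆ B := by
    intro A B hA hB hvA hvB a haA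
    obtain ⟨w⟩ := hA.2.2.1.preconnected ⟨v, by simpa using hvA⟩ ⟨a, by simpa using haA⟩
    exact walk_prop (G := G) (S := (A : Set V)) (fun u => (u : V) ∈ B)
      (fun u v huv hu => hB.2.2.2 u hu v (hA.2.1 (by simpa using v.2)) huv) w hvB
  exact le_antisymm (key A B hA hB hvA hvB) (key B A hB hA hvB hvA)

lemma no_edge_comps {G : SimpleGraph V} {S A B : Finset V}
    (hA : IsCompOf G S A) (hB : IsCompOf G S B) (hAB : A ≠ B) :
    ∀ a ∈ A, ∀ b ∈ B, ¬ G.Adj a b := by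
  intro a ha b hb hadj
  have hbA : b ∈ A := hA.2.2.2 a ha b (hB.2.1 hb) hadj
  exact hAB (comp_eq_of_mem hA hB hbA hb)

/-- From the adjacency pattern of a P6, derive a contradiction with P6-freeness. -/
lemma find_p6 {G : SimpleGraph V} (hP6 : PFree 6 G) {a b c d e f : V}
    (hab : G.Adj a b) (hbc : G.Adj b c) (hcd : G.Adj c d) (hde : G.Adj d e) (hef : G.Adj e f)
    (nac : ¬G.Adj a c) (nad : ¬G.Adj a d) (nae : ¬G.Adj a e) (naf : ¬G.Adj a f)
    (nbd : ¬G.Adj b d) (nbe : ¬G.Adj b e) (nbf : ¬G.Adj b f)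
    (nce : ¬G.Adj c e) (ncf : ¬G.Adj c f) (ndf : ¬G.Adj d f)
    (dac : a ≠ c) (dad : a ≠ d) (dae : a ≠ e) (daf : a ≠ f)
    (dbd : b ≠ d) (dbe : b ≠ e) (dbf : b ≠ f)
    (dce : c ≠ e) (dcf : c ≠ f) (ddf : d ≠ f) : False := by
  have dab := hab.ne; have dbc := hbc.ne; have dcd := hcd.ne
  have dde := hde.ne; have def' := hef.ne
  apply hP6
  refine ⟨![a,b,c,d,e,f], ?_, ?_⟩
  · intro i j hij
    fin_cases i <;> fin_cases j <;>
      simp only [Matrix.cons_val_zero, Matrix.cons_val_one, Matrix.head_cons,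
        Matrix.cons_val_two, Matrix.tail_cons, Matrix.cons_val_three,
        Matrix.cons_val_four, Matrix.cons_val_fin_one, Matrix.cons_val'] at hij <;>
      first
      | rfl
      | exact absurd hij (by assumption)
      | exact absurd hij.symm (by assumption)
  · intro i j
    fin_cases i <;> fin_cases j <;>
      simp only [Matrix.cons_val_zero, Matrix.cons_val_one, Matrix.head_cons,
        Matrix.cons_val_two, Matrix.tail_cons, Matrix.cons_val_three,
        Matrix.cons_val_four, Matrix.cons_val_fin_one, Matrix.cons_val', Fin.val_zero,
        Fin.val_one] <;>
      norm_num <;>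
      first
      | assumption
      | exact fun h => (by assumption : ¬ _) h.symm
      | exact hab.symm
      | exact hbc.symm
      | exact hcd.symm
      | exact hde.symm
      | exact hef.symm

/-- Key lemma: if `Q ⊆ A` is a clique, `x ∈ X` has no neighbor in `Q` and a
non-neighbor in `B`, then some vertex of `A` is adjacent to `x` and complete to `Q`. -/
lemma key_lemma {G : SimpleGraph V} (hP6 : PFree 6 G) {X A B : Finset V}
    (hA : IsFullComp G X A) (hB : IsFullComp G X B) (hAB : A ≠ B)
    {Q : Finset V} (hQA : Q ⊆ A) (hQcl : G.IsClique (Q : Set V))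
    {x : V} (hx : x ∈ X) (hxQ : ∀ q ∈ Q, ¬ G.Adj x q)
    {b : V} (hbB : b ∈ B) (hxb : ¬ G.Adj x b) :
    ∃ a ∈ A, G.Adj x a ∧ ∀ q ∈ Q, G.Adj a q := by
  classical
  have noAB := no_edge_comps hA.1 hB.1 hAB
  have hAX : ∀ a ∈ A, a ∉ X := fun a ha => (Finset.mem_sdiff.mp (hA.1.2.1 ha)).2
  have hBX : ∀ c ∈ B, c ∉ X := fun c hc => (Finset.mem_sdiff.mp (hB.1.2.1 hc)).2
  have hABd : ∀ v, v ∈ A → v ∈ B → False :=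
    fun v h1 h2 => hAB (comp_eq_of_mem hA.1 hB.1 h1 h2)
  obtain ⟨a0, ha0A, hxa0⟩ := hA.2 x hx
  obtain ⟨b0, hb0B, hxb0⟩ := hB.2 x hx
  obtain ⟨wB⟩ := hB.1.2.2.1.preconnected ⟨b0, by simpa using hb0B⟩ ⟨b, by simpa using hbB⟩
  obtain ⟨v1, v2, hv1B', hv2B', hxv1, hv12, hxv2⟩ := xFrontier wB hxb0 hxb
  have hv1B : v1 ∈ B := by simpa using hv1B'
  have hv2B : v2 ∈ B := by simpa using hv2B'
  rcases Q.eq_empty_or_nonempty with rfl | ⟨q0, hq0⟩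
  · exact ⟨a0, ha0A, hxa0, by simp⟩
  have hq0A : q0 ∈ A := hQA hq0
  -- the reachability invariant
  set P : ↥(A : Set V) → Prop :=
    fun u => G.Adj x u ∨ ∃ p ∈ A, G.Adj x p ∧ G.Adj p (u : V) with hPdef
  have hclosed : ∀ u v : ↥(A : Set V), G.Adj u v → P u → P v := by
    intro u v huv hu
    have huA : (u : V) ∈ A := by simpa using u.2
    have hvA : (v : V) ∈ A := by simpa using v.2
    by_cases hxv : G.Adj x v
    · exact Or.inl hxv
    by_cases hxu : G.Adj x (u : V)
    · exact Or.inr ⟨u, huA, hxu, huv⟩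
    rcases hu with h | ⟨p, hpA, hxp, hpu⟩
    · exact absurd h hxu
    refine Or.inr ⟨p, hpA, hxp, ?_⟩
    by_contra hpv
    exact find_p6 hP6 hv12.symm hxv1.symm hxp hpu huv
      (fun h => hxv2 h.symm)
      (fun h => noAB p hpA v2 hv2B h.symm)
      (fun h => noAB u huA v2 hv2B h.symm)
      (fun h => noAB v hvA v2 hv2B h.symm)
      (fun h => noAB p hpA v1 hv1B h.symm)
      (fun h => noAB u huA v1 hv1B h.symm)
      (fun h => noAB v hvA v1 hv1B h.symm)
      hxu hxv hpv
      (fun h => hBX v2 hv2B (h ▸ hx))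
      (fun h => hABd p hpA (h ▸ hv2B))
      (fun h => hABd u huA (h ▸ hv2B))
      (fun h => hABd (v : V) hvA (h ▸ hv2B))
      (fun h => hABd p hpA (h ▸ hv1B))
      (fun h => hABd u huA (h ▸ hv1B))
      (fun h => hABd (v : V) hvA (h ▸ hv1B))
      (fun h => hAX u huA (h ▸ hx))
      (fun h => hAX (v : V) hvA (h ▸ hx))
      (fun h => hxv (h ▸ hxp))
  obtain ⟨wA⟩ := hA.1.2.2.1.preconnected ⟨a0, by simpa using ha0A⟩ ⟨q0, by simpa using hq0A⟩
  have hq0P : P ⟨q0, by simpa using hq0A⟩ := walk_prop P hclosed wA (Or.inl hxa0)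
  have hq0P' : G.Adj x q0 ∨ ∃ p ∈ A, G.Adj x p ∧ G.Adj p q0 := hq0P
  rcases hq0P' with h | ⟨p, hpA, hxp, hpq0⟩
  · exact absurd h (hxQ q0 hq0)
  refine ⟨p, hpA, hxp, ?_⟩
  intro q hq
  by_cases hqq0 : q = q0
  · exact hqq0 ▸ hpq0
  by_contra hpq
  have hqA : q ∈ A := hQA hq
  have hq0q : G.Adj q0 q :=
    hQcl (Finset.mem_coe.mpr hq0) (Finset.mem_coe.mpr hq) (Ne.symm hqq0)
  exact find_p6 hP6 hv12.symm hxv1.symm hxp hpq0 hq0q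
    (fun h => hxv2 h.symm)
    (fun h => noAB p hpA v2 hv2B h.symm)
    (fun h => noAB q0 hq0A v2 hv2B h.symm)
    (fun h => noAB q hqA v2 hv2B h.symm)
    (fun h => noAB p hpA v1 hv1B h.symm)
    (fun h => noAB q0 hq0A v1 hv1B h.symm)
    (fun h => noAB q hqA v1 hv1B h.symm)
    (hxQ q0 hq0) (hxQ q hq) hpq
    (fun h => hBX v2 hv2B (h ▸ hx))
    (fun h => hABd p hpA (h ▸ hv2B))
    (fun h => hABd q0 hq0A (h ▸ hv2B))
    (fun h => hABd q hqA (h ▸ hv2B))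
    (fun h => hABd p hpA (h ▸ hv1B))
    (fun h => hABd q0 hq0A (h ▸ hv1B))
    (fun h => hABd q hqA (h ▸ hv1B))
    (fun h => hAX q0 hq0A (h ▸ hx))
    (fun h => hAX q hqA (h ▸ hx))
    (fun h => (hxQ q hq) (h ▸ hxp))

/-- In a P6-free graph of clique number at most k (k ≥ 2), for any minimal separator X
with distinct full components A and B, there is Q ⊆ A with |Q| ≤ k such that every
vertex of X outside N(Q) is complete to B. -/
theorem exists_small_dominating_set (G : SimpleGraph V) [DecidableRel G.Adj] (k : ℕ)
    (hP6 : PFree 6 G) (hk2 : 2 ≤ k) (hclique : G.cliqueNum ≤ k)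
    (X A B : Finset V) (hX : IsMinSep G X)
    (hA : IsFullComp G X A) (hB : IsFullComp G X B) (hAB : A ≠ B) :
    ∃ Q : Finset V, Q ⊆ A ∧ Q.card ≤ k ∧
      ∀ x ∈ X, x ∉ nbhd G Q → ∀ b ∈ B, G.Adj x b := by
  classical
  obtain ⟨Q, hQmem, hQmax⟩ : ∃ Q ∈ (A.powerset).filter (fun Q : Finset V => G.IsClique (Q : Set V)),
      ∀ x ∈ (A.powerset).filter (fun Q : Finset V => G.IsClique (Q : Set V)), ¬ Q < x := by
    obtain ⟨Q, hQ⟩ :=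
      ((A.powerset).filter (fun Q : Finset V => G.IsClique (Q : Set V))).exists_maximal
        ⟨∅, by simp⟩
    exact ⟨Q, hQ.1, fun x hx => hQ.not_gt hx⟩
  rw [Finset.mem_filter, Finset.mem_powerset] at hQmem
  obtain ⟨hQA, hQcl⟩ := hQmem
  have hAX : ∀ a ∈ A, a ∉ X := fun a ha => (Finset.mem_sdiff.mp (hA.1.2.1 ha)).2
  refine ⟨Q, hQA, le_trans (SimpleGraph.IsClique.card_le_cliqueNum (tc := hQcl)) hclique, ?_⟩
  intro x hxX hxnb b hbB
  by_contra hxb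
  have hxQmem : x ∉ Q := fun h => hAX x (hQA h) hxX
  have hxQ : ∀ q ∈ Q, ¬ G.Adj x q := by
    intro q hq hadj
    refine hxnb ?_
    simp only [nbhd, Finset.mem_filter, Finset.mem_univ, true_and]
    exact ⟨hxQmem, q, hq, hadj⟩
  obtain ⟨a, haA, hxa, hacomp⟩ := key_lemma hP6 hA hB hAB hQA hQcl hxX hxQ hbB hxb
  have haQ : a ∉ Q := fun h => (hxQ a h) hxa
  apply hQmax (insert a Q)
  · rw [Finset.mem_filter, Finset.mem_powerset]
    refine ⟨Finset.insert_subset haA hQA, ?_⟩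
    rw [Finset.coe_insert, SimpleGraph.isClique_insert]
    exact ⟨hQcl, fun q hq _ => (hacomp q (Finset.mem_coe.mp hq))⟩
  · exact Finset.ssubset_insert haQ
end

section
/- For n ≥ 2, the n-prism (two disjoint n-vertex cliques A = {a_1,...,a_n} and B = {b_1,...,b_n} together with the perfect matching a_i b_i) has at least 2^n − 2 minimal separators. -/
variable {V : Type*} [Fintype V] [DecidableEq V]

/-- The n-prism: two n-cliques joined by a perfect matching. -/
def prism (n : ℕ) : SimpleGraph (Fin n ⊕ Fin n) :=
  SimpleGraph.fromRel (fun u v =>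
    match u, v with
    | .inl _, .inl _ => True
    | .inr _, .inr _ => True
    | .inl i, .inr j => i = j
    | .inr i, .inl j => i = j)


lemma prism_adj_ll {n : ℕ} (i k : Fin n) : (prism n).Adj (.inl i) (.inl k) ↔ i ≠ k := by
  simp [prism, SimpleGraph.fromRel_adj]

lemma prism_adj_rr {n : ℕ} (i k : Fin n) : (prism n).Adj (.inr i) (.inr k) ↔ i ≠ k := by
  simp [prism, SimpleGraph.fromRel_adj]

lemma prism_adj_lr {n : ℕ} (i k : Fin n) : (prism n).Adj (.inl i) (.inr k) ↔ i = k := by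
  simp [prism, SimpleGraph.fromRel_adj]; tauto

lemma prism_adj_rl {n : ℕ} (i k : Fin n) : (prism n).Adj (.inr i) (.inl k) ↔ i = k := by
  simp [prism, SimpleGraph.fromRel_adj]; tauto

lemma clique_connected (G : SimpleGraph V) (s : Set V) (hs : s.Nonempty)
    (h : ∀ u ∈ s, ∀ v ∈ s, u ≠ v → G.Adj u v) : (G.induce s).Connected := by
  rw [SimpleGraph.connected_iff]
  refine ⟨fun u v => ?_, ⟨⟨hs.choose, hs.choose_spec⟩⟩⟩
  by_cases huv : u = v
  · exact huv ▸ SimpleGraph.Reachable.refl _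
  · exact SimpleGraph.Adj.reachable
      (by simp [SimpleGraph.comap_adj]
          exact h u.1 u.2 v.1 v.2 (fun he => huv (Subtype.ext he)))

def prismSep (n : ℕ) (S : Finset (Fin n)) : Finset (Fin n ⊕ Fin n) :=
  S.image .inl ∪ Sᶜ.image .inr

lemma mem_prismSep {n : ℕ} (S : Finset (Fin n)) (v : Fin n ⊕ Fin n) :
    v ∈ prismSep n S ↔ (∃ i ∈ S, v = .inl i) ∨ (∃ j ∉ S, v = .inr j) := by
  simp [prismSep, eq_comm]

lemma prismSep_fullA {n : ℕ} (S : Finset (Fin n)) (hS : S.Nonempty) (hS' : S ≠ Finset.univ) :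
    IsFullComp (prism n) (prismSep n S) (Sᶜ.image .inl) := by
  have hcompl : Sᶜ.Nonempty := by
    rw [← Finset.card_pos, Finset.card_compl]
    have := (Finset.card_lt_iff_ne_univ S).2 hS'
    omega
  constructor
  · refine ⟨hcompl.image _, ?_, ?_, ?_⟩
    · intro v hv
      simp only [Finset.mem_image, Finset.mem_compl] at hv
      obtain ⟨i, hi, rfl⟩ := hv
      simp only [Finset.mem_sdiff, Finset.mem_univ, true_and, mem_prismSep]
      push_neg
      refine ⟨fun k hk he => ?_, fun k _ he => ?_⟩
      · injection he with h'; subst h'; exact hi hk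
      · simp at he
    · apply clique_connected _ _ (Finset.coe_nonempty.mpr (hcompl.image _))
      rintro u hu v hv huv
      simp only [Finset.coe_image, Set.mem_image, Finset.mem_coe, Finset.mem_compl] at hu hv
      obtain ⟨i, hi, rfl⟩ := hu
      obtain ⟨k, hk, rfl⟩ := hv
      exact (prism_adj_ll i k).2 (fun h => huv (h ▸ rfl))
    · rintro u hu v hv hadj
      simp only [Finset.mem_image, Finset.mem_compl] at hu ⊢
      obtain ⟨i, hi, rfl⟩ := hu
      simp only [Finset.mem_sdiff, Finset.mem_univ, true_and, mem_prismSep] at hv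
      push_neg at hv
      obtain ⟨hv1, hv2⟩ := hv
      match v with
      | .inl k => exact ⟨k, fun hk => hv1 k hk rfl, rfl⟩
      | .inr j =>
        exfalso
        have := (prism_adj_lr i j).1 hadj
        subst this
        exact hv2 i hi rfl
  · intro x hx
    rw [mem_prismSep] at hx
    rcases hx with ⟨i, hi, rfl⟩ | ⟨j, hj, rfl⟩
    · obtain ⟨k, hk⟩ := hcompl
      rw [Finset.mem_compl] at hk
      exact ⟨.inl k, Finset.mem_image_of_mem _ (Finset.mem_compl.2 hk),
        (prism_adj_ll i k).2 (fun h => hk (h ▸ hi))⟩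
    · exact ⟨.inl j, Finset.mem_image_of_mem _ (Finset.mem_compl.2 hj),
        (prism_adj_rl j j).2 rfl⟩

lemma prismSep_fullB {n : ℕ} (S : Finset (Fin n)) (hS : S.Nonempty) (hS' : S ≠ Finset.univ) :
    IsFullComp (prism n) (prismSep n S) (S.image .inr) := by
  have hcompl : Sᶜ.Nonempty := by
    rw [← Finset.card_pos, Finset.card_compl]
    have := (Finset.card_lt_iff_ne_univ S).2 hS'
    omega
  constructor
  · refine ⟨hS.image _, ?_, ?_, ?_⟩
    · intro v hv
      simp only [Finset.mem_image] at hv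
      obtain ⟨i, hi, rfl⟩ := hv
      simp only [Finset.mem_sdiff, Finset.mem_univ, true_and, mem_prismSep]
      push_neg
      refine ⟨fun k _ he => ?_, fun k hk he => ?_⟩
      · simp at he
      · injection he with h'; subst h'; exact hk hi
    · apply clique_connected _ _ (Finset.coe_nonempty.mpr (hS.image _))
      rintro u hu v hv huv
      simp only [Finset.coe_image, Set.mem_image, Finset.mem_coe] at hu hv
      obtain ⟨i, hi, rfl⟩ := hu
      obtain ⟨k, hk, rfl⟩ := hv
      exact (prism_adj_rr i k).2 (fun h => huv (h ▸ rfl))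
    · rintro u hu v hv hadj
      simp only [Finset.mem_image] at hu ⊢
      obtain ⟨i, hi, rfl⟩ := hu
      simp only [Finset.mem_sdiff, Finset.mem_univ, true_and, mem_prismSep] at hv
      push_neg at hv
      obtain ⟨hv1, hv2⟩ := hv
      match v with
      | .inr k =>
        refine ⟨k, ?_, rfl⟩
        by_contra hk
        exact hv2 k (by simpa using hk) rfl
      | .inl j =>
        exfalso
        have := (prism_adj_rl i j).1 hadj
        subst this
        exact hv1 i hi rfl
  · intro x hx
    rw [mem_prismSep] at hx
    rcases hx with ⟨i, hi, rfl⟩ | ⟨j, hj, rfl⟩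
    · exact ⟨.inr i, Finset.mem_image_of_mem _ hi, (prism_adj_lr i i).2 rfl⟩
    · obtain ⟨k, hk⟩ := hS
      exact ⟨.inr k, Finset.mem_image_of_mem _ hk,
        (prism_adj_rr j k).2 (fun h => hj (h ▸ hk))⟩

lemma prismSep_isMinSep {n : ℕ} (S : Finset (Fin n)) (hS : S.Nonempty) (hS' : S ≠ Finset.univ) :
    IsMinSep (prism n) (prismSep n S) := by
  refine ⟨Sᶜ.image .inl, S.image .inr, prismSep_fullA S hS hS', prismSep_fullB S hS hS', ?_⟩
  intro h
  have hcompl : Sᶜ.Nonempty := by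
    rw [← Finset.card_pos, Finset.card_compl]
    have := (Finset.card_lt_iff_ne_univ S).2 hS'
    omega
  obtain ⟨k, hk⟩ := hcompl
  have : (Sum.inl k : Fin n ⊕ Fin n) ∈ S.image .inr := h ▸ Finset.mem_image_of_mem _ hk
  simp at this

lemma prismSep_injective (n : ℕ) : Function.Injective (prismSep n) := by
  intro S T h
  ext i
  constructor <;> intro hi
  · have : (Sum.inl i : Fin n ⊕ Fin n) ∈ prismSep n T := by
      rw [← h, mem_prismSep]; exact Or.inl ⟨i, hi, rfl⟩
    rw [mem_prismSep] at this
    rcases this with ⟨k, hk, he⟩ | ⟨k, _, he⟩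
    · injection he with h'; exact h' ▸ hk
    · exact absurd he (by simp)
  · have : (Sum.inl i : Fin n ⊕ Fin n) ∈ prismSep n S := by
      rw [h, mem_prismSep]; exact Or.inl ⟨i, hi, rfl⟩
    rw [mem_prismSep] at this
    rcases this with ⟨k, hk, he⟩ | ⟨k, _, he⟩
    · injection he with h'; exact h' ▸ hk
    · exact absurd he (by simp)

/-- For n ≥ 2, the n-prism has at least 2^n - 2 minimal separators. -/
theorem prism_minSep_ge (n : ℕ) (hn : 2 ≤ n) :
    2 ^ n - 2 ≤ {X : Finset (Fin n ⊕ Fin n) | IsMinSep (prism n) X}.ncard := by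
  classical
  set T : Finset (Finset (Fin n)) := Finset.univ \ {∅, Finset.univ} with hT
  have hTcard : T.card = 2 ^ n - 2 := by
    rw [hT, Finset.card_sdiff_of_subset (by simp)]
    have h1 : ({∅, Finset.univ} : Finset (Finset (Fin n))).card = 2 := by
      have : Nonempty (Fin n) := ⟨⟨0, by omega⟩⟩
      rw [Finset.card_insert_of_notMem (by
        simp only [Finset.mem_singleton]
        exact fun h => Finset.univ_nonempty.ne_empty h.symm), Finset.card_singleton]
    rw [h1, Finset.card_univ, Fintype.card_finset, Fintype.card_fin]
  have hsub : ((T.image (prismSep n) : Finset _) : Set (Finset (Fin n ⊕ Fin n))) ⊆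
      {X | IsMinSep (prism n) X} := by
    intro X hX
    simp only [Finset.coe_image, Set.mem_image, Finset.mem_coe, hT,
      Finset.mem_sdiff, Finset.mem_univ, true_and, Finset.mem_insert,
      Finset.mem_singleton] at hX
    obtain ⟨S, hS, rfl⟩ := hX
    push_neg at hS
    exact prismSep_isMinSep S hS.1 hS.2
  calc 2 ^ n - 2 = (T.image (prismSep n)).card := by
        rw [Finset.card_image_of_injective _ (prismSep_injective n), hTcard]
    _ = ((T.image (prismSep n) : Finset _) : Set (Finset (Fin n ⊕ Fin n))).ncard := by
        rw [Set.ncard_coe_finset]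
    _ ≤ _ := Set.ncard_le_ncard hsub (Set.toFinite _)
end

section
/- The n-prism is P_5-free, i.e., contains no induced path on 5 vertices. -/
variable {V : Type*} [Fintype V] [DecidableEq V]

lemma prism_adj_same_side {n : ℕ} {u v : Fin n ⊕ Fin n}
    (hne : u ≠ v) (hside : u.isLeft = v.isLeft) : (prism n).Adj u v := by
  cases u with
  | inl a => cases v with
    | inl b => exact ⟨hne, Or.inl trivial⟩
    | inr b => simp at hside
  | inr a => cases v with
    | inl b => simp at hside
    | inr b => exact ⟨hne, Or.inl trivial⟩

/-- The n-prism is P5-free. -/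
theorem prism_P5_free (n : ℕ) : PFree 5 (prism n) := by
  rintro ⟨f, hinj, hadj⟩
  -- pigeonhole: three indices with the same side
  obtain ⟨y, -, hy⟩ := Finset.exists_lt_card_fiber_of_mul_lt_card_of_maps_to
    (s := (Finset.univ : Finset (Fin 5))) (t := (Finset.univ : Finset Bool))
    (f := fun i => (f i).isLeft) (n := 2) (fun a _ => Finset.mem_univ _) (by simp)
  obtain ⟨i, j, k, hi, hj, hk, hij, hik, hjk⟩ := Finset.two_lt_card_iff.mp hy
  simp only [Finset.mem_filter] at hi hj hk
  have aij : (prism n).Adj (f i) (f j) :=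
    prism_adj_same_side (fun h => hij (hinj h)) (hi.2.trans hj.2.symm)
  have aik : (prism n).Adj (f i) (f k) :=
    prism_adj_same_side (fun h => hik (hinj h)) (hi.2.trans hk.2.symm)
  have ajk : (prism n).Adj (f j) (f k) :=
    prism_adj_same_side (fun h => hjk (hinj h)) (hj.2.trans hk.2.symm)
  have h1 := (hadj i j).mp aij
  have h2 := (hadj i k).mp aik
  have h3 := (hadj j k).mp ajk
  have hij' : i.1 ≠ j.1 := fun h => hij (Fin.ext h)
  have hik' : i.1 ≠ k.1 := fun h => hik (Fin.ext h)
  have hjk' : j.1 ≠ k.1 := fun h => hjk (Fin.ext h)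
  omega
end

section
/- Let G be a P_6-free graph, X ⊆ V(G), A a full component of X, and B a full component of X distinct from A with |B| ≥ 2 (so G[B] is connected and every vertex of X has a neighbor in B). If x ∈ X is not complete to B and there is an induced P_4 in G with one endpoint x and the other three vertices in A, then G contains an induced P_6 — hence in a P_6-free graph, every x ∈ X admitting such a P_4 into A must be complete to B. -/
variable {V : Type*} [Fintype V] [DecidableEq V]

lemma comp_subset_of_mem {G : SimpleGraph V} {S A B : Finset V}
    (hA : IsCompOf G S A) (hB : IsCompOf G S B) {w : V}
    (hwA : w ∈ A) (hwB : w ∈ B) : A ⊆ B := by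
  obtain ⟨-, hAS, hconn, -⟩ := hA
  obtain ⟨-, hBS, -, hcl⟩ := hB
  intro a ha
  obtain ⟨p⟩ := hconn.preconnected ⟨w, by simpa using hwA⟩ ⟨a, by simpa using ha⟩
  have key : ∀ (u v : ↥(A : Set V)), (G.induce (A : Set V)).Walk u v →
      (u : V) ∈ B → (v : V) ∈ B := by
    intro u v q
    induction q with
    | nil => exact id
    | @cons u' v' w' h q ih =>
      intro hu
      have hadj : G.Adj (u' : V) (v' : V) := h
      have hv'S : (v' : V) ∈ S := hAS (by simpa using v'.2)
      exact ih (hcl _ hu _ hv'S hadj)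
  exact key _ _ p hwB

lemma comp_eq_or_disjoint {G : SimpleGraph V} {S A B : Finset V}
    (hA : IsCompOf G S A) (hB : IsCompOf G S B) : A = B ∨ Disjoint A B := by
  by_cases h : Disjoint A B
  · exact Or.inr h
  · obtain ⟨w, hwA, hwB⟩ := Finset.not_disjoint_iff.mp h
    exact Or.inl (le_antisymm (comp_subset_of_mem hA hB hwA hwB)
      (comp_subset_of_mem hB hA hwB hwA))

lemma boundary_pair {G : SimpleGraph V} {B : Finset V} {x : V}
    (u v : ↥(B : Set V)) (q : (G.induce (B : Set V)).Walk u v)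
    (hu : G.Adj x u) (hv : ¬ G.Adj x v) :
    ∃ p ∈ B, ∃ r ∈ B, G.Adj p r ∧ G.Adj x p ∧ ¬ G.Adj x r := by
  induction q with
  | nil => exact absurd hu hv
  | @cons a b c h q ih =>
    by_cases hb : G.Adj x b
    · exact ih hb hv
    · exact ⟨a, by simpa using a.2, b, by simpa using b.2, h, hu, hb⟩

/-- In a P6-free graph, if A and B are distinct full components of X with |B| ≥ 2
and x ∈ X starts an induced P4 whose remaining vertices lie in A, then x is
complete to B (otherwise the P4 would extend to an induced P6). -/
theorem complete_of_p4 (G : SimpleGraph V)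
    (hP6 : PFree 6 G) (X A B : Finset V)
    (hA : IsFullComp G X A) (hB : IsFullComp G X B) (hAB : A ≠ B)
    (hBcard : 2 ≤ B.card) (x : V) (hx : x ∈ X)
    (hP4 : ∃ f : Fin 4 → V, IsInducedPath G f ∧ f 0 = x ∧ ∀ i : Fin 4, i ≠ 0 → f i ∈ A) :
    ∀ b ∈ B, G.Adj x b := by
  intro b hb
  by_contra hxb
  obtain ⟨f, hf, hf0, hfA⟩ := hP4
  obtain ⟨hAcomp, hAfull⟩ := hA
  obtain ⟨hBcomp, hBfull⟩ := hB
  -- A and B are disjoint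
  have hdisj : Disjoint A B := by
    rcases comp_eq_or_disjoint hAcomp hBcomp with h | h
    · exact absurd h hAB
    · exact h
  have hAX : ∀ a ∈ A, a ∉ X := fun a ha => (Finset.mem_sdiff.mp (hAcomp.2.1 ha)).2
  have hBX : ∀ a ∈ B, a ∉ X := fun a ha => (Finset.mem_sdiff.mp (hBcomp.2.1 ha)).2
  -- no edges between A and B
  have hcross : ∀ a ∈ A, ∀ c ∈ B, ¬ G.Adj a c := by
    intro a ha c hc hadj
    have hcS : c ∈ Finset.univ \ X := hBcomp.2.1 hc
    have : c ∈ A := hAcomp.2.2.2 a ha c hcS hadj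
    exact Finset.disjoint_left.mp hdisj this hc
  -- find adjacent p, r in B with x~p, ¬x~r
  obtain ⟨b', hb', hxb'⟩ := hBfull x hx
  obtain ⟨wk⟩ := hBcomp.2.2.1.preconnected ⟨b', by simpa using hb'⟩ ⟨b, by simpa using hb⟩
  obtain ⟨p, hpB, r, hrB, hpr, hxp, hxr⟩ := boundary_pair _ _ wk hxb' hxb
  -- facts about the P4
  have hx1 : G.Adj x (f 1) := by
    have := (hf.2 0 1).mpr (by left; rfl)
    rwa [hf0] at this
  have hx2 : ¬ G.Adj x (f 2) := by
    have := (hf.2 0 2); rw [hf0] at this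
    intro h; rcases this.mp h with h' | h' <;> revert h' <;> decide
  have hx3 : ¬ G.Adj x (f 3) := by
    have := (hf.2 0 3); rw [hf0] at this
    intro h; rcases this.mp h with h' | h' <;> revert h' <;> decide
  have h12 : G.Adj (f 1) (f 2) := (hf.2 1 2).mpr (by left; rfl)
  have h23 : G.Adj (f 2) (f 3) := (hf.2 2 3).mpr (by left; rfl)
  have h13 : ¬ G.Adj (f 1) (f 3) := by
    intro h; rcases (hf.2 1 3).mp h with h' | h' <;> revert h' <;> decide
  have hf1A : f 1 ∈ A := hfA 1 (by decide)
  have hf2A : f 2 ∈ A := hfA 2 (by decide)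
  have hf3A : f 3 ∈ A := hfA 3 (by decide)
  have hxA : x ∉ A := fun h => hAX x h hx
  have hxB : x ∉ B := fun h => hBX x h hx
  have hpr' : p ≠ r := G.ne_of_adj hpr
  have hAB' : ∀ a ∈ A, ∀ c ∈ B, a ≠ c := by
    intro a ha c hc h; exact Finset.disjoint_left.mp hdisj ha (h ▸ hc)
  have hinj : ∀ i j : Fin 4, f i = f j → i = j := fun i j => @hf.1 i j
  -- build the P6
  apply hP6
  have hinj4 : ∀ i j : Fin 4, f i = f j → i = j := fun i j h => hf.1 h
  have d01 : r ≠ p := (G.ne_of_adj hpr).symm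
  have d02 : r ≠ x := fun h => hxB (h ▸ hrB)
  have d03 : r ≠ f 1 := fun h => hAB' _ hf1A _ hrB h.symm
  have d04 : r ≠ f 2 := fun h => hAB' _ hf2A _ hrB h.symm
  have d05 : r ≠ f 3 := fun h => hAB' _ hf3A _ hrB h.symm
  have d12 : p ≠ x := fun h => hxB (h ▸ hpB)
  have d13 : p ≠ f 1 := fun h => hAB' _ hf1A _ hpB h.symm
  have d14 : p ≠ f 2 := fun h => hAB' _ hf2A _ hpB h.symm
  have d15 : p ≠ f 3 := fun h => hAB' _ hf3A _ hpB h.symm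
  have d23 : x ≠ f 1 := fun h => hxA (h ▸ hf1A)
  have d24 : x ≠ f 2 := fun h => hxA (h ▸ hf2A)
  have d25 : x ≠ f 3 := fun h => hxA (h ▸ hf3A)
  have d34 : f 1 ≠ f 2 := fun h => absurd (hinj4 _ _ h) (by decide)
  have d35 : f 1 ≠ f 3 := fun h => absurd (hinj4 _ _ h) (by decide)
  have d45 : f 2 ≠ f 3 := fun h => absurd (hinj4 _ _ h) (by decide)
  refine ⟨![r, p, x, f 1, f 2, f 3], ?_, ?_⟩
  · intro i j hij
    fin_cases i <;> fin_cases j <;>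
      simp only [Matrix.cons_val_zero, Matrix.cons_val_one, Matrix.head_cons,
        Matrix.cons_val', Matrix.cons_val_succ, Matrix.empty_val',
        Matrix.cons_val_fin_one, Matrix.head_fin_const] at hij <;>
      first
      | rfl
      | exact absurd hij d01 | exact absurd hij.symm d01
      | exact absurd hij d02 | exact absurd hij.symm d02
      | exact absurd hij d03 | exact absurd hij.symm d03
      | exact absurd hij d04 | exact absurd hij.symm d04
      | exact absurd hij d05 | exact absurd hij.symm d05
      | exact absurd hij d12 | exact absurd hij.symm d12
      | exact absurd hij d13 | exact absurd hij.symm d13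
      | exact absurd hij d14 | exact absurd hij.symm d14
      | exact absurd hij d15 | exact absurd hij.symm d15
      | exact absurd hij d23 | exact absurd hij.symm d23
      | exact absurd hij d24 | exact absurd hij.symm d24
      | exact absurd hij d25 | exact absurd hij.symm d25
      | exact absurd hij d34 | exact absurd hij.symm d34
      | exact absurd hij d35 | exact absurd hij.symm d35
      | exact absurd hij d45 | exact absurd hij.symm d45
  · intro i j
    fin_cases i <;> fin_cases j <;>
      simp only [Matrix.cons_val_zero, Matrix.cons_val_one, Matrix.head_cons,
        Matrix.cons_val_two, Matrix.tail_cons, Matrix.cons_val_three,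
        Matrix.cons_val_four, Matrix.cons_val_fin_one, Fin.mk_zero, Fin.mk_one,
        Matrix.cons_val', Matrix.cons_val_succ, Matrix.empty_val'] <;>
      constructor <;> intro h <;>
      first
      | omega
      | decide
      | (exact absurd h (G.irrefl))
      | (exact hpr.symm)
      | (exact hpr)
      | (exact hxp)
      | (exact hxp.symm)
      | (exact hx1)
      | (exact hx1.symm)
      | (exact h12)
      | (exact h12.symm)
      | (exact h23)
      | (exact h23.symm)
      | (exact absurd h hxr)
      | (exact absurd h.symm hxr)
      | (exact absurd h hxb)
      | (exact absurd h hx2)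
      | (exact absurd h.symm hx2)
      | (exact absurd h hx3)
      | (exact absurd h.symm hx3)
      | (exact absurd h h13)
      | (exact absurd h.symm h13)
      | (exact absurd h.symm (hcross _ hf1A _ hpB)) | (exact absurd h (hcross _ hf1A _ hpB))
      | (exact absurd h.symm (hcross _ hf2A _ hpB)) | (exact absurd h (hcross _ hf2A _ hpB))
      | (exact absurd h.symm (hcross _ hf3A _ hpB)) | (exact absurd h (hcross _ hf3A _ hpB))
      | (exact absurd h.symm (hcross _ hf1A _ hrB)) | (exact absurd h (hcross _ hf1A _ hrB))
      | (exact absurd h.symm (hcross _ hf2A _ hrB)) | (exact absurd h (hcross _ hf2A _ hrB))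
      | (exact absurd h.symm (hcross _ hf3A _ hrB)) | (exact absurd h (hcross _ hf3A _ hrB))
end
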